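/- arXiv:2311.10583 — 7 statements merged into one kernel-verified Lean document; each statement's English description precedes it below -/
import Mathlib

section
/- For any formula A of the bimodal language L₂, GR ⊢ A if and only if GR° ⊢ □A. -/
/-- Formulas of the bimodal language `L₂`: countably many propositional
variables, `⊥`, `¬`, `∨`, and two modal operators `□` (`box`) and `■` (`bb`). -/
inductive Formula : Type
  | var : ℕ → Formula
  | falsum : Formula
  | neg : Formula → Formula
  | or : Formula → Formula → Formula
  | box : Formula → Formula
  | bb : Formula → Formula

namespace Formula

/-- `A → B` is defined as `¬A ∨ B`. -/
def imp (A B : Formula) : Formula := (A.neg).or B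

/-- `A ∧ B` is defined as `¬(¬A ∨ ¬B)`. -/
def and (A B : Formula) : Formula := ((A.neg).or B.neg).neg

/-- `◇A` abbreviates `¬□¬A`. -/
def dia (A : Formula) : Formula := ((A.neg).box).neg

end Formula

/-- Propositional evaluation: variables and formulas of the form `□A`, `■A`
are treated as atoms whose truth value is given by `v`. -/
def evalProp (v : Formula → Bool) : Formula → Bool
  | .var n => v (.var n)
  | .falsum => false
  | .neg A => !(evalProp v A)
  | .or A B => evalProp v A || evalProp v B
  | .box A => v (.box A)
  | .bb A => v (.bb A)

/-- Propositional tautologies of the bimodal language `L₂`. -/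
def Taut (A : Formula) : Prop := ∀ v : Formula → Bool, evalProp v A = true

/-- The logic GR. -/
inductive GR : Formula → Prop
  | taut {A : Formula} : Taut A → GR A
  | k {A B : Formula} : GR (((A.imp B).box).imp ((A.box).imp (B.box)))
  | loeb {A : Formula} : GR ((((A.box).imp A).box).imp (A.box))
  | bbBox {A : Formula} : GR ((A.bb).imp (A.box))
  | boxBb {A : Formula} : GR ((A.box).imp ((A.bb).box))
  | ros {A : Formula} : GR ((A.box).imp ((Formula.falsum.box).or (A.bb)))
  | diaBb {A : Formula} : GR (((A.bb).dia).imp (A.dia))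
  | mp {A B : Formula} : GR (A.imp B) → GR A → GR B
  | nec {A : Formula} : GR A → GR (A.box)
  | boxElim {A : Formula} : GR (A.box) → GR A

/-- The logic GRcirc. -/
inductive GRcirc : Formula → Prop
  | taut {A : Formula} : Taut A → GRcirc A
  | k {A B : Formula} : GRcirc (((A.imp B).box).imp ((A.box).imp (B.box)))
  | loeb {A : Formula} : GRcirc ((((A.box).imp A).box).imp (A.box))
  | bbBox {A : Formula} : GRcirc ((A.bb).imp (A.box))
  | boxBb {A : Formula} : GRcirc ((A.box).imp ((A.bb).box))
  | ros {A : Formula} : GRcirc ((A.box).imp ((Formula.falsum.box).or (A.bb)))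
  | diaBb {A : Formula} : GRcirc (((A.bb).dia).imp (A.dia))
  | mp {A B : Formula} : GRcirc (A.imp B) → GRcirc A → GRcirc B
  | nec {A : Formula} : GRcirc A → GRcirc (A.box)
  | bbnec {A : Formula} : GRcirc A → GRcirc (A.bb)

/-!
GR° is contained in GR, since ■-necessitation is derivable there from `□A → □■A` and
□-elimination; so GR° ⊢ □A gives GR ⊢ A. Conversely, induct on a GR-derivation of `A`: every
axiom and rule lifts under □ in GR° (□-necessitation via ■-necessitation and `■A → □A`), except
□-elimination, for which one needs that GR° ⊢ □□A implies GR° ⊢ □A.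

That rule is admissible by a model argument. If GR° ⊬ □A, the finite canonical model over an
adequate set containing `□A` has a world `X₀ ∌ □A`. A new root below `X₀` and its successors gives
a transitive, conversely well-founded model of GR° (■ agrees with □ except at dead ends, where it
is read off the canonical worlds) in which `□□A` fails at the root.
-/

deriving instance DecidableEq for Formula

namespace Formula

def conj : List Formula → Formula
  | [] => falsum.neg
  | C :: L => C.and (conj L)

def disj : List Formula → Formula
  | [] => falsum
  | C :: L => C.or (disj L)

end Formula

open Formula

attribute [simp] evalProp

@[simp]
theorem evalProp_imp (v : Formula → Bool) (A B : Formula) :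
    evalProp v (A.imp B) = (!evalProp v A || evalProp v B) := rfl

@[simp]
theorem evalProp_and (v : Formula → Bool) (A B : Formula) :
    evalProp v (A.and B) = (evalProp v A && evalProp v B) := by
  simp [Formula.and]

@[simp]
theorem evalProp_conj (v : Formula → Bool) (L : List Formula) :
    evalProp v (conj L) = L.all (evalProp v) := by
  induction L with
  | nil => rfl
  | cons C L ih => simp [conj, ih]

@[simp]
theorem evalProp_disj (v : Formula → Bool) (L : List Formula) :
    evalProp v (disj L) = L.any (evalProp v) := by
  induction L with
  | nil => rfl
  | cons C L ih => simp [disj, ih]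

namespace GRcirc

variable {A B C G : Formula}

theorem mp₂ (h : GRcirc (A.imp (B.imp C))) (hA : GRcirc A) (hB : GRcirc B) : GRcirc C :=
  (h.mp hA).mp hB

theorem imp_refl : GRcirc (A.imp A) :=
  taut fun v => by simp

theorem and_left : GRcirc ((A.and B).imp A) :=
  taut fun v => by simp; grind

theorem and_right : GRcirc ((A.and B).imp B) :=
  taut fun v => by simp; grind

theorem falsum_imp : GRcirc (falsum.imp A) :=
  taut fun v => by simp

theorem imp_of (G : Formula) (h : GRcirc A) : GRcirc (G.imp A) :=
  (taut (A := A.imp (G.imp A)) fun v => by simp; grind).mp h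

theorem imp_trans (h₁ : GRcirc (A.imp B)) (h₂ : GRcirc (B.imp C)) : GRcirc (A.imp C) :=
  mp₂ (taut fun v => by simp; grind) h₁ h₂

theorem imp_and (h₁ : GRcirc (G.imp A)) (h₂ : GRcirc (G.imp B)) : GRcirc (G.imp (A.and B)) :=
  mp₂ (taut fun v => by simp; grind) h₁ h₂

theorem imp_falsum (h₁ : GRcirc (G.imp A)) (h₂ : GRcirc (G.imp A.neg)) :
    GRcirc (G.imp falsum) :=
  mp₂ (taut fun v => by simp; grind) h₁ h₂

theorem imp_of_imp_or (h₁ : GRcirc (G.imp (A.or B))) (h₂ : GRcirc (G.imp A.neg)) :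
    GRcirc (G.imp B) :=
  mp₂ (taut fun v => by simp; grind) h₁ h₂

theorem or_imp (h₁ : GRcirc (A.imp C)) (h₂ : GRcirc (B.imp C)) : GRcirc ((A.or B).imp C) :=
  mp₂ (taut fun v => by simp; grind) h₁ h₂

theorem imp_of_neg_imp_neg (h : GRcirc (A.neg.imp B.neg)) : GRcirc (B.imp A) :=
  (taut (A := (A.neg.imp B.neg).imp (B.imp A)) fun v => by simp; grind).mp h

theorem of_neg_imp_falsum (h : GRcirc (A.neg.imp falsum)) : GRcirc A :=
  (taut (A := (A.neg.imp falsum).imp A) fun v => by simp).mp h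

theorem imp_imp_of_and_imp (h : GRcirc ((A.and B).imp C)) : GRcirc (A.imp (B.imp C)) :=
  (taut (A := ((A.and B).imp C).imp (A.imp (B.imp C))) fun v => by simp; grind).mp h

theorem and_imp_of_imp_imp (h : GRcirc (A.imp (B.imp C))) : GRcirc ((A.and B).imp C) :=
  (taut (A := (A.imp (B.imp C)).imp ((A.and B).imp C)) fun v => by simp; grind).mp h

theorem conj_imp_of_mem {L : List Formula} (h : C ∈ L) : GRcirc ((conj L).imp C) :=
  taut fun v => by simp only [evalProp_imp, evalProp_conj]; grind [List.all_eq_true]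

theorem imp_conj {L : List Formula} (h : ∀ C ∈ L, GRcirc (G.imp C)) : GRcirc (G.imp (conj L)) := by
  induction L with
  | nil => exact imp_of G (taut fun v => rfl)
  | cons D L ih =>
    exact imp_and (h D List.mem_cons_self) (ih fun C hC => h C (List.mem_cons_of_mem D hC))

theorem disj_imp {L : List Formula} (h : ∀ C ∈ L, GRcirc (C.imp G)) : GRcirc ((disj L).imp G) := by
  induction L with
  | nil => exact falsum_imp
  | cons D L ih =>
    exact or_imp (h D List.mem_cons_self) (ih fun C hC => h C (List.mem_cons_of_mem D hC))

theorem box_mono (h : GRcirc (A.imp B)) : GRcirc (A.box.imp B.box) :=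
  k.mp (nec h)

theorem box_and : GRcirc ((A.box.and B.box).imp (A.and B).box) :=
  and_imp_of_imp_imp (imp_trans (box_mono (imp_imp_of_and_imp imp_refl)) k)

theorem box_box : GRcirc (A.box.imp A.box.box) := by
  have h : GRcirc (A.imp ((A.and A.box).box.imp (A.and A.box))) :=
    imp_imp_of_and_imp (imp_and and_left (imp_trans and_right (box_mono and_left)))
  exact imp_trans (imp_trans (box_mono h) loeb) (box_mono and_right)

theorem box_conj (L : List Formula) : GRcirc ((conj (L.map box)).imp (conj L).box) := by
  induction L with
  | nil => exact imp_of _ (nec (taut fun v => rfl))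
  | cons D L ih => exact imp_trans (imp_and and_left (imp_trans and_right ih)) box_and

end GRcirc

namespace Formula

/-- Besides `B`, `■B` brings along what the truth lemma for `■B` (`□B`, `□■B`) and the witness
argument for `◇■B → ◇B` (`□¬B`, `¬B`, `□¬■B`, `¬■B`) need. -/
def cl : Formula → Finset Formula
  | var n => {var n}
  | falsum => {falsum}
  | neg B => insert B.neg B.cl
  | or B C => insert (B.or C) (B.cl ∪ C.cl)
  | box B => insert B.box B.cl
  | bb B => {B.bb, B.box, B.neg.box, B.neg, B.bb.neg.box, B.bb.neg, B.bb.box} ∪ B.cl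

@[simp]
theorem mem_cl_self (B : Formula) : B ∈ B.cl := by
  cases B <;> simp [cl]

theorem cl_subset_cl {B C : Formula} (h : C ∈ B.cl) : C.cl ⊆ B.cl := by
  induction B with
  | var | falsum => simp_all [cl]
  | neg B ih | box B ih =>
    rcases Finset.mem_insert.1 h with rfl | h
    · rfl
    · exact (ih h).trans (Finset.subset_insert _ _)
  | or B C ihB ihC =>
    simp only [cl, Finset.mem_insert, Finset.mem_union] at h
    rcases h with rfl | h | h
    · rfl
    · exact (ihB h).trans (Finset.subset_union_left.trans (Finset.subset_insert _ _))
    · exact (ihC h).trans (Finset.subset_union_right.trans (Finset.subset_insert _ _))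
  | bb B ih =>
    simp only [cl, Finset.mem_union, Finset.mem_insert, Finset.mem_singleton] at h
    rcases h with h | h
    · rcases h with rfl | rfl | rfl | rfl | rfl | rfl | rfl <;>
        simp +contextual [cl, Finset.subset_iff]
    · exact (ih h).trans Finset.subset_union_right

end Formula

structure Adequate (Φ : Finset Formula) : Prop where
  cl_subset : ∀ C ∈ Φ, C.cl ⊆ Φ
  box_falsum_mem : falsum.box ∈ Φ

theorem Adequate.mem {Φ : Finset Formula} (hΦ : Adequate Φ) {C D : Formula} (hC : C ∈ Φ)
    (hD : D ∈ C.cl) : D ∈ Φ :=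
  hΦ.cl_subset C hC hD

theorem adequate_cl_union_cl (A : Formula) : Adequate (A.cl ∪ falsum.box.cl) where
  cl_subset C hC := by
    rcases Finset.mem_union.1 hC with h | h
    · exact (cl_subset_cl h).trans Finset.subset_union_left
    · exact (cl_subset_cl h).trans Finset.subset_union_right
  box_falsum_mem := Finset.mem_union_right _ (mem_cl_self _)

def Consistent (G : Formula) : Prop := ¬ GRcirc (G.imp falsum)

noncomputable def descr (Φ X : Finset Formula) : Formula :=
  conj (Φ.toList.map fun C => if C ∈ X then C else C.neg)

section Descr

variable {Φ X : Finset Formula} {C G : Formula}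

theorem descr_imp_of_mem (hC : C ∈ Φ) (hX : C ∈ X) : GRcirc ((descr Φ X).imp C) :=
  GRcirc.conj_imp_of_mem (List.mem_map.2 ⟨C, Finset.mem_toList.2 hC, if_pos hX⟩)

theorem descr_imp_neg_of_not_mem (hC : C ∈ Φ) (hX : C ∉ X) :
    GRcirc ((descr Φ X).imp C.neg) :=
  GRcirc.conj_imp_of_mem (List.mem_map.2 ⟨C, Finset.mem_toList.2 hC, if_neg hX⟩)

theorem evalProp_descr_filter (v : Formula → Bool) :
    evalProp v (descr Φ (Φ.filter fun C => evalProp v C)) = true := by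
  simp only [descr, evalProp_conj, List.all_map, List.all_eq_true, Finset.mem_toList]
  intro C hC
  by_cases hv : evalProp v C <;> simp [hC, hv]

theorem exists_consistent_and_descr (hG : Consistent G) :
    ∃ X ⊆ Φ, Consistent (G.and (descr Φ X)) := by
  by_contra! h
  have hcover : GRcirc (G.imp (disj (Φ.powerset.toList.map fun X => G.and (descr Φ X)))) :=
    GRcirc.taut fun v => by
      cases hv : evalProp v G
      · simp [hv]
      · simpa [hv] using ⟨_, Finset.filter_subset _ _, evalProp_descr_filter v⟩
  refine hG (GRcirc.imp_trans hcover (GRcirc.disj_imp fun D hD => ?_))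
  obtain ⟨X, hX, rfl⟩ := List.mem_map.1 hD
  exact not_not.1 (h X (Finset.mem_powerset.1 (Finset.mem_toList.1 hX)))

end Descr

@[ext]
structure CanWorld (Φ : Finset Formula) where
  carrier : Finset Formula
  subset : carrier ⊆ Φ
  consistent : Consistent (descr Φ carrier)

namespace CanWorld

variable {Φ : Finset Formula} {A B C G : Formula}

instance : Finite (CanWorld Φ) :=
  Finite.of_injective
    (fun X : CanWorld Φ => (⟨X.carrier, Finset.mem_powerset.2 X.subset⟩ : Φ.powerset))
    fun _ _ h => CanWorld.ext (congrArg Subtype.val h)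

theorem exists_consistent_and (hG : Consistent G) :
    ∃ Y : CanWorld Φ, Consistent (G.and (descr Φ Y.carrier)) := by
  obtain ⟨X, hXΦ, hX⟩ := exists_consistent_and_descr (Φ := Φ) hG
  exact ⟨⟨X, hXΦ, fun h => hX (GRcirc.imp_trans GRcirc.and_right h)⟩, hX⟩

theorem mem_of_consistent_and {Y : CanWorld Φ} (hY : Consistent (G.and (descr Φ Y.carrier)))
    (hGC : GRcirc (G.imp C)) (hC : C ∈ Φ) : C ∈ Y.carrier := by
  by_contra hn
  exact hY (GRcirc.imp_falsum (GRcirc.imp_trans GRcirc.and_left hGC)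
    (GRcirc.imp_trans GRcirc.and_right (descr_imp_neg_of_not_mem hC hn)))

theorem not_mem_of_consistent_and {Y : CanWorld Φ} (hY : Consistent (G.and (descr Φ Y.carrier)))
    (hGC : GRcirc (G.imp C.neg)) : C ∉ Y.carrier := fun hC =>
  hY (GRcirc.imp_falsum (GRcirc.imp_trans GRcirc.and_right (descr_imp_of_mem (Y.subset hC) hC))
    (GRcirc.imp_trans GRcirc.and_left hGC))

theorem exists_not_mem (h : ¬ GRcirc C) : ∃ X : CanWorld Φ, C ∉ X.carrier := by
  obtain ⟨X, hX⟩ := exists_consistent_and (Φ := Φ) (G := C.neg) fun h' =>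
    h (GRcirc.of_neg_imp_falsum h')
  exact ⟨X, not_mem_of_consistent_and hX GRcirc.imp_refl⟩

variable (X : CanWorld Φ)

theorem descr_imp (hC : C ∈ X.carrier) : GRcirc ((descr Φ X.carrier).imp C) :=
  descr_imp_of_mem (X.subset hC) hC

theorem mem_of_descr_imp (h : GRcirc ((descr Φ X.carrier).imp C)) (hC : C ∈ Φ) : C ∈ X.carrier := by
  by_contra hn
  exact X.consistent (GRcirc.imp_falsum h (descr_imp_neg_of_not_mem hC hn))

theorem mem_of_imp (h : GRcirc (A.imp C)) (hA : A ∈ X.carrier) (hC : C ∈ Φ) : C ∈ X.carrier :=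
  X.mem_of_descr_imp (GRcirc.imp_trans (X.descr_imp hA) h) hC

theorem mem_of_GRcirc (h : GRcirc C) (hC : C ∈ Φ) : C ∈ X.carrier :=
  X.mem_of_descr_imp (GRcirc.imp_of _ h) hC

theorem falsum_not_mem : falsum ∉ X.carrier := fun h =>
  X.consistent (X.descr_imp h)

theorem neg_mem_iff (hC : C ∈ Φ) (hnC : C.neg ∈ Φ) : C.neg ∈ X.carrier ↔ C ∉ X.carrier :=
  ⟨fun hn h => X.consistent (GRcirc.imp_falsum (X.descr_imp h) (X.descr_imp hn)),
    fun h => X.mem_of_descr_imp (descr_imp_neg_of_not_mem hC h) hnC⟩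

theorem or_mem_iff (hBC : B.or C ∈ Φ) (hB : B ∈ Φ) (hC : C ∈ Φ) :
    B.or C ∈ X.carrier ↔ B ∈ X.carrier ∨ C ∈ X.carrier := by
  refine ⟨fun h => ?_, ?_⟩
  · by_contra! hn
    exact X.consistent (GRcirc.imp_falsum
      (GRcirc.imp_of_imp_or (X.descr_imp h) (descr_imp_neg_of_not_mem hB hn.1))
      (descr_imp_neg_of_not_mem hC hn.2))
  · rintro (h | h)
    · exact X.mem_of_imp (GRcirc.taut fun v => by simp; grind) h hBC
    · exact X.mem_of_imp (GRcirc.taut fun v => by simp; grind) h hBC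

def R (X Y : CanWorld Φ) : Prop :=
  (∀ C : Formula, C.box ∈ X.carrier → C ∈ Y.carrier ∧ C.box ∈ Y.carrier) ∧
    ∃ C : Formula, C.box ∈ Y.carrier ∧ C.box ∉ X.carrier

theorem R_trans {Y Z : CanWorld Φ} : X.R Y → Y.R Z → X.R Z := by
  rintro ⟨hXY, C, hCY, hCX⟩ ⟨hYZ, -⟩
  exact ⟨fun D hD => hYZ D (hXY D hD).2, C, (hYZ C hCY).2, hCX⟩

theorem R_irrefl : ¬ X.R X := fun ⟨_, _, hC, hnC⟩ => hnC hC

noncomputable def boxedConj (X : Finset Formula) : Formula :=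
  conj ((X.preimage box fun _ _ _ _ h => box.inj h).toList.map fun C => C.and C.box)

theorem boxedConj_imp {X : Finset Formula} (hC : C.box ∈ X) :
    GRcirc ((boxedConj X).imp (C.and C.box)) :=
  GRcirc.conj_imp_of_mem (List.mem_map_of_mem (Finset.mem_toList.2 (Finset.mem_preimage.2 hC)))

theorem descr_imp_box_boxedConj : GRcirc ((descr Φ X.carrier).imp (boxedConj X.carrier).box) := by
  refine GRcirc.imp_trans (GRcirc.imp_conj fun D hD => ?_) (GRcirc.box_conj _)
  obtain ⟨_, hE, rfl⟩ := List.mem_map.1 hD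
  obtain ⟨C, hC, rfl⟩ := List.mem_map.1 hE
  have hCX := X.descr_imp (Finset.mem_preimage.1 (Finset.mem_toList.1 hC))
  exact GRcirc.imp_trans (GRcirc.imp_and hCX (GRcirc.imp_trans hCX GRcirc.box_box)) GRcirc.box_and

/-- If `boxedConj X ∧ □B ∧ ¬B` were inconsistent, `boxedConj X` would prove `□B → B`, and Löb's
axiom would put `□B` into `X`. -/
theorem exists_R_not_mem (hΦ : Adequate Φ) (hB : B.box ∈ Φ) (hX : B.box ∉ X.carrier) :
    ∃ Y, X.R Y ∧ B ∉ Y.carrier := by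
  set G := (boxedConj X.carrier).and (B.box.and B.neg)
  have hG : Consistent G := fun h => by
    have hLB : GRcirc ((boxedConj X.carrier).imp (B.box.imp B)) :=
      (GRcirc.taut (A := (G.imp falsum).imp ((boxedConj X.carrier).imp (B.box.imp B)))
        fun v => by simp [G]; grind).mp h
    exact hX (X.mem_of_descr_imp (GRcirc.imp_trans X.descr_imp_box_boxedConj
      (GRcirc.imp_trans (GRcirc.box_mono hLB) GRcirc.loeb)) hB)
  obtain ⟨Y, hY⟩ := exists_consistent_and hG
  have hGC {C : Formula} (hC : C.box ∈ X.carrier) : GRcirc (G.imp (C.and C.box)) :=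
    GRcirc.imp_trans GRcirc.and_left (boxedConj_imp hC)
  refine ⟨Y, ⟨fun C hC => ⟨?_, ?_⟩, B, ?_, hX⟩, ?_⟩
  · exact mem_of_consistent_and hY (GRcirc.imp_trans (hGC hC) GRcirc.and_left)
      (hΦ.mem (X.subset hC) (by simp [cl]))
  · exact mem_of_consistent_and hY (GRcirc.imp_trans (hGC hC) GRcirc.and_right) (X.subset hC)
  · exact mem_of_consistent_and hY (GRcirc.imp_trans GRcirc.and_right GRcirc.and_left) hB
  · exact not_mem_of_consistent_and hY (GRcirc.imp_trans GRcirc.and_right GRcirc.and_right)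

variable {X}

theorem exists_R_iff (hΦ : Adequate Φ) : (∃ Y, X.R Y) ↔ falsum.box ∉ X.carrier := by
  refine ⟨fun ⟨Y, hXY⟩ h => Y.falsum_not_mem (hXY.1 falsum h).1, fun h => ?_⟩
  obtain ⟨Y, hXY, -⟩ := X.exists_R_not_mem hΦ hΦ.box_falsum_mem h
  exact ⟨Y, hXY⟩

theorem bb_mem_iff_box_mem (hΦ : Adequate Φ) (hB : B.bb ∈ Φ) (hX : falsum.box ∉ X.carrier) :
    B.bb ∈ X.carrier ↔ B.box ∈ X.carrier := by
  refine ⟨fun h => X.mem_of_imp GRcirc.bbBox h (hΦ.mem hB (by simp [cl])), fun h => ?_⟩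
  exact X.mem_of_descr_imp (GRcirc.imp_of_imp_or (GRcirc.imp_trans (X.descr_imp h) GRcirc.ros)
    (descr_imp_neg_of_not_mem hΦ.box_falsum_mem hX)) hB

theorem bb_mem_of_R (hΦ : Adequate Φ) {Z : CanWorld Φ} (hB : B.bb ∈ Φ) (hZX : Z.R X)
    (hZ : B.box ∈ Z.carrier) :
    B.bb ∈ X.carrier :=
  (hZX.1 _ (Z.mem_of_imp GRcirc.boxBb hZ (hΦ.mem hB (by simp [cl])))).1

theorem neg_box_not_mem_of_R (hΦ : Adequate Φ) {Z : CanWorld Φ} (hZX : Z.R X)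
    (hX : B.bb ∈ X.carrier) :
    B.neg.box ∉ Z.carrier := fun hZ => by
  have hbbΦ := X.subset hX
  have hZ' := Z.mem_of_imp (GRcirc.imp_of_neg_imp_neg GRcirc.diaBb) hZ (hΦ.mem hbbΦ (by simp [cl]))
  exact (X.neg_mem_iff hbbΦ (hΦ.mem hbbΦ (by simp [cl]))).1 (hZX.1 _ hZ').1 hX

end CanWorld

structure Model (W : Type*) where
  R : W → W → Prop
  val : ℕ → W → Prop
  bbAt : W → Formula → Prop

namespace Model

variable {W : Type*} (M : Model W)

/-- In the dead-end clause for `■B`, the last two disjuncts make ■-necessitation and `□A → □■A`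
valid; `bbAt` is where the canonical model puts everything else. -/
def Sat : Formula → W → Prop
  | .var n, w => M.val n w
  | .falsum, _ => False
  | .neg B, w => ¬ Sat B w
  | .or B C, w => Sat B w ∨ Sat C w
  | .box B, w => ∀ v, M.R w v → Sat B v
  | .bb B, w =>
      ((∃ v, M.R w v) ∧ ∀ v, M.R w v → Sat B v) ∨
      ((∀ v, ¬ M.R w v) ∧
        (M.bbAt w B ∨ (GRcirc B ∧ Sat B w) ∨ ∃ u, M.R u w ∧ ∀ v, M.R u v → Sat B v))

variable {M} {A B : Formula} {w : W}

theorem sat_imp : M.Sat (A.imp B) w ↔ (M.Sat A w → M.Sat B w) := by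
  simp only [Formula.imp, Sat]
  tauto

theorem sat_dia : M.Sat A.dia w ↔ ∃ v, M.R w v ∧ M.Sat A v := by
  simp [Formula.dia, Sat]

theorem sat_bb_of_R {v : W} (h : M.R w v) : M.Sat A.bb w ↔ M.Sat A.box w := by
  simp only [Sat]
  grind

theorem sat_bb_of_dead (h : ∀ v, ¬ M.R w v) :
    M.Sat A.bb w ↔ M.bbAt w A ∨ (GRcirc A ∧ M.Sat A w) ∨ ∃ u, M.R u w ∧ M.Sat A.box u := by
  simp only [Sat]
  grind

theorem sat_of_taut (h : Taut A) (w : W) : M.Sat A w := by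
  classical
  have key (C : Formula) : evalProp (fun D => decide (M.Sat D w)) C = true ↔ M.Sat C w := by
    induction C with
    | var | box | bb => simp
    | falsum => simp [Sat]
    | neg B ih => simp [Sat, ← ih]
    | or B C ihB ihC => simp [Sat, ← ihB, ← ihC]
  exact (key A).1 (h _)

structure Admissible (M : Model W) : Prop where
  trans : ∀ {u v w : W}, M.R u v → M.R v w → M.R u w
  wf : WellFounded (flip M.R)
  bbAt_witness : ∀ {w x : W} {B : Formula}, M.R w x → (∀ y, ¬ M.R x y) → M.bbAt x B →
    ∃ u, M.R w u ∧ M.Sat B u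

theorem sat_loeb (hM : M.Admissible) (w : W) : M.Sat ((A.box.imp A).box.imp A.box) w := by
  rw [sat_imp]
  intro h v hwv
  induction v using hM.wf.induction with
  | _ v ih => exact sat_imp.1 (h v hwv) fun u hvu => ih u hvu (hM.trans hwv hvu)

theorem sat_bbBox (w : W) : M.Sat (A.bb.imp A.box) w := by
  rw [sat_imp]
  intro h
  by_cases hw : ∃ v, M.R w v
  · obtain ⟨v, hwv⟩ := hw
    exact (sat_bb_of_R hwv).1 h
  · exact fun v hwv => (hw ⟨v, hwv⟩).elim

theorem sat_boxBb (hM : M.Admissible) (w : W) : M.Sat (A.box.imp A.bb.box) w := by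
  rw [sat_imp]
  intro h v hwv
  by_cases hv : ∃ u, M.R v u
  · obtain ⟨u, hvu⟩ := hv
    exact (sat_bb_of_R hvu).2 fun u hvu => h u (hM.trans hwv hvu)
  · exact (sat_bb_of_dead (not_exists.1 hv)).2 (Or.inr (Or.inr ⟨w, hwv, h⟩))

theorem sat_ros (w : W) : M.Sat (A.box.imp (falsum.box.or A.bb)) w := by
  rw [sat_imp]
  intro h
  by_cases hw : ∃ v, M.R w v
  · obtain ⟨v, hwv⟩ := hw
    exact Or.inr ((sat_bb_of_R hwv).2 h)
  · exact Or.inl fun v hwv => (hw ⟨v, hwv⟩).elim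

theorem sat_diaBb (hM : M.Admissible) (w : W) : M.Sat (A.bb.dia.imp A.dia) w := by
  rw [sat_imp, sat_dia, sat_dia]
  rintro ⟨v, hwv, hv⟩
  by_cases hsucc : ∃ u, M.R v u
  · obtain ⟨u, hvu⟩ := hsucc
    exact ⟨u, hM.trans hwv hvu, (sat_bb_of_R hvu).1 hv u hvu⟩
  · rcases (sat_bb_of_dead (not_exists.1 hsucc)).1 hv with h | ⟨-, h⟩ | ⟨u, huv, hu⟩
    · exact hM.bbAt_witness hwv (not_exists.1 hsucc) h
    · exact ⟨v, hwv, h⟩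
    · exact ⟨v, hwv, hu v huv⟩

theorem sat_bb_of_GRcirc (hA : GRcirc A) (h : ∀ v, M.Sat A v) (w : W) : M.Sat A.bb w := by
  by_cases hw : ∃ v, M.R w v
  · obtain ⟨v, hwv⟩ := hw
    exact (sat_bb_of_R hwv).2 fun u _ => h u
  · exact (sat_bb_of_dead (not_exists.1 hw)).2 (Or.inr (Or.inl ⟨hA, h w⟩))

theorem Admissible.sat_of_GRcirc (hM : M.Admissible) (h : GRcirc A) : ∀ w, M.Sat A w := by
  induction h with
  | taut h => exact sat_of_taut h
  | k => exact fun w => sat_imp.2 fun h₁ => sat_imp.2 fun h₂ v hv => sat_imp.1 (h₁ v hv) (h₂ v hv)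
  | loeb => exact sat_loeb hM
  | bbBox => exact sat_bbBox
  | boxBb => exact sat_boxBb hM
  | ros => exact sat_ros
  | diaBb => exact sat_diaBb hM
  | mp _ _ ih₁ ih₂ => exact fun w => sat_imp.1 (ih₁ w) (ih₂ w)
  | nec _ ih => exact fun _ v _ => ih v
  | bbnec hA ih => exact sat_bb_of_GRcirc hA ih

end Model

namespace CanWorld

variable {Φ : Finset Formula} {B : Formula} {X₀ : CanWorld Φ}

def rootedR (X₀ : CanWorld Φ) : Option (CanWorld Φ) → Option (CanWorld Φ) → Prop
  | some X, some Y => X.R Y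
  | none, some Y => Y = X₀ ∨ X₀.R Y
  | _, none => False

def rootedModel (X₀ : CanWorld Φ) : Model (Option (CanWorld Φ)) where
  R := X₀.rootedR
  val n w := ∃ X ∈ w, var n ∈ X.carrier
  bbAt w B := ∃ X ∈ w, B.bb ∈ X.carrier

theorem rootedR_trans {u v w : Option (CanWorld Φ)} :
    X₀.rootedR u v → X₀.rootedR v w → X₀.rootedR u w := by
  match u, v, w with
  | _, _, none | _, none, _ => exact fun h₁ h₂ => by simp_all [rootedR]
  | some X, some Y, some Z => exact R_trans X
  | none, some Y, some Z =>
    rintro (rfl | h₁) h₂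
    exacts [Or.inr h₂, Or.inr (R_trans _ h₁ h₂)]

theorem wellFounded_flip_rootedR (X₀ : CanWorld Φ) : WellFounded (flip X₀.rootedR) := by
  have : IsTrans _ (flip X₀.rootedR) := ⟨fun _ _ _ h₁ h₂ => rootedR_trans h₂ h₁⟩
  have : Std.Irrefl (flip X₀.rootedR) := ⟨fun
    | some X => R_irrefl X
    | none => id⟩
  exact Finite.wellFounded_of_trans_of_irrefl _

theorem rootedR_exists_pred {u : Option (CanWorld Φ)} {X : CanWorld Φ}
    (h : X₀.rootedR u (some X)) (hX : X ≠ X₀) :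
    ∃ Z : CanWorld Φ, Z.R X ∧ ∀ v, X₀.rootedR (some Z) v → X₀.rootedR u v := by
  match u, h with
  | some W, h => exact ⟨W, h, fun _ => id⟩
  | none, .inl h => exact (hX h).elim
  | none, .inr h =>
    refine ⟨X₀, h, ?_⟩
    rintro (_ | Y) hY
    exacts [hY.elim, Or.inr hY]

theorem forall_not_rootedR_iff (hΦ : Adequate Φ) {X : CanWorld Φ} :
    (∀ v, ¬ X₀.rootedR (some X) v) ↔ falsum.box ∈ X.carrier := by
  refine ⟨fun h => by_contra fun hX => ?_, fun hX => ?_⟩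
  · obtain ⟨Y, hXY⟩ := (X.exists_R_iff hΦ).2 hX
    exact h (some Y) hXY
  · rintro (_ | Y) hXY
    exacts [hXY, (X.exists_R_iff hΦ).1 ⟨Y, hXY⟩ hX]

theorem rootedModel_sat_box_iff (hΦ : Adequate Φ) (hB : B.box ∈ Φ)
    (ih : ∀ Y : CanWorld Φ, X₀.rootedModel.Sat B (some Y) ↔ B ∈ Y.carrier) (X : CanWorld Φ) :
    X₀.rootedModel.Sat B.box (some X) ↔ B.box ∈ X.carrier := by
  refine ⟨fun h => ?_, ?_⟩
  · by_contra hn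
    obtain ⟨Y, hXY, hY⟩ := X.exists_R_not_mem hΦ hB hn
    exact hY ((ih Y).1 (h (some Y) hXY))
  · rintro h (_ | Y) hXY
    exacts [hXY.elim, (ih Y).2 (hXY.1 B h).1]

theorem rootedModel_sat_bb_iff (hΦ : Adequate Φ) (hX₀ : falsum.box ∉ X₀.carrier)
    (hB : B.bb ∈ Φ) (ih : ∀ Y : CanWorld Φ, X₀.rootedModel.Sat B (some Y) ↔ B ∈ Y.carrier)
    (X : CanWorld Φ) : X₀.rootedModel.Sat B.bb (some X) ↔ B.bb ∈ X.carrier := by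
  have hbox := rootedModel_sat_box_iff hΦ (hΦ.mem hB (by simp [cl])) ih
  by_cases hX : falsum.box ∈ X.carrier
  · rw [Model.sat_bb_of_dead ((forall_not_rootedR_iff hΦ).2 hX)]
    refine ⟨?_, fun h => Or.inl ⟨X, rfl, h⟩⟩
    rintro (⟨_, ⟨⟩, h⟩ | ⟨hB', -⟩ | ⟨u, hu, hsat⟩)
    · exact h
    · exact X.mem_of_GRcirc (GRcirc.bbnec hB') hB
    · obtain ⟨Z, hZX, hZu⟩ := rootedR_exists_pred hu fun h => hX₀ (h ▸ hX)
      exact bb_mem_of_R hΦ hB hZX ((hbox Z).1 fun v hv => hsat v (hZu v hv))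
  · obtain ⟨Y, hXY⟩ := (X.exists_R_iff hΦ).2 hX
    rw [Model.sat_bb_of_R (show X₀.rootedModel.R (some X) (some Y) from hXY), hbox,
      bb_mem_iff_box_mem hΦ hB hX]

theorem rootedModel_sat_iff (hΦ : Adequate Φ) (hX₀ : falsum.box ∉ X₀.carrier) (hB : B ∈ Φ)
    (X : CanWorld Φ) : X₀.rootedModel.Sat B (some X) ↔ B ∈ X.carrier := by
  induction B generalizing X with
  | var n => simp [Model.Sat, rootedModel]
  | falsum => exact ⟨False.elim, X.falsum_not_mem⟩
  | neg B ih =>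
    have hB' : B ∈ Φ := hΦ.mem hB (by simp [cl])
    exact (not_congr (ih hB' X)).trans (X.neg_mem_iff hB' hB).symm
  | or B C ihB ihC =>
    have hB' : B ∈ Φ := hΦ.mem hB (by simp [cl])
    have hC' : C ∈ Φ := hΦ.mem hB (by simp [cl])
    exact (or_congr (ihB hB' X) (ihC hC' X)).trans (X.or_mem_iff hB hB' hC').symm
  | box B ih => exact rootedModel_sat_box_iff hΦ hB (ih (hΦ.mem hB (by simp [cl]))) X
  | bb B ih => exact rootedModel_sat_bb_iff hΦ hX₀ hB (ih (hΦ.mem hB (by simp [cl]))) X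

theorem rootedModel_admissible (hΦ : Adequate Φ) (hX₀ : falsum.box ∉ X₀.carrier) :
    X₀.rootedModel.Admissible where
  trans := rootedR_trans
  wf := wellFounded_flip_rootedR X₀
  bbAt_witness {w x B} hwx hx := by
    rintro ⟨X, rfl, hX⟩
    have hXdead := (forall_not_rootedR_iff hΦ).1 hx
    obtain ⟨Z, hZX, hZw⟩ := rootedR_exists_pred hwx fun h => hX₀ (h ▸ hXdead)
    have hbbΦ := X.subset hX
    have hBΦ : B ∈ Φ := hΦ.mem hbbΦ (by simp [cl])
    have hnegΦ : B.neg ∈ Φ := hΦ.mem hbbΦ (by simp [cl])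
    obtain ⟨Y, hZY, hY⟩ := Z.exists_R_not_mem hΦ (hΦ.mem hbbΦ (by simp [cl]))
      (neg_box_not_mem_of_R hΦ hZX hX)
    refine ⟨some Y, hZw _ hZY, (rootedModel_sat_iff hΦ hX₀ hBΦ Y).2 ?_⟩
    by_contra h
    exact hY ((Y.neg_mem_iff hBΦ hnegΦ).2 h)

end CanWorld

theorem GRcirc.of_box_box {A : Formula} (h : GRcirc A.box.box) : GRcirc A.box := by
  have hΦ := adequate_cl_union_cl A.box
  have hA : A.box ∈ A.box.cl ∪ falsum.box.cl := Finset.mem_union_left _ (mem_cl_self _)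
  by_contra hn
  obtain ⟨X₀, hX₀⟩ := CanWorld.exists_not_mem (Φ := A.box.cl ∪ falsum.box.cl) hn
  have hlive : falsum.box ∉ X₀.carrier := fun h =>
    hX₀ (X₀.mem_of_imp (GRcirc.box_mono GRcirc.falsum_imp) h hA)
  have hsat := (X₀.rootedModel_admissible hΦ hlive).sat_of_GRcirc h none (some X₀) (Or.inl rfl)
  exact hX₀ ((X₀.rootedModel_sat_iff hΦ hlive hA X₀).1 hsat)

theorem GRcirc.toGR {A : Formula} (h : GRcirc A) : GR A := by
  induction h with
  | taut h => exact GR.taut h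
  | k => exact GR.k
  | loeb => exact GR.loeb
  | bbBox => exact GR.bbBox
  | boxBb => exact GR.boxBb
  | ros => exact GR.ros
  | diaBb => exact GR.diaBb
  | mp _ _ ih₁ ih₂ => exact GR.mp ih₁ ih₂
  | nec _ ih => exact GR.nec ih
  | bbnec _ ih => exact GR.boxElim (GR.mp GR.boxBb (GR.nec ih))

theorem GR.GRcirc_box {A : Formula} (h : GR A) : GRcirc A.box := by
  induction h with
  | taut h => exact GRcirc.nec (GRcirc.taut h)
  | k => exact GRcirc.nec GRcirc.k
  | loeb => exact GRcirc.nec GRcirc.loeb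
  | bbBox => exact GRcirc.nec GRcirc.bbBox
  | boxBb => exact GRcirc.nec GRcirc.boxBb
  | ros => exact GRcirc.nec GRcirc.ros
  | diaBb => exact GRcirc.nec GRcirc.diaBb
  | mp _ _ ih₁ ih₂ => exact GRcirc.mp (GRcirc.mp GRcirc.k ih₁) ih₂
  | nec _ ih => exact GRcirc.mp GRcirc.bbBox (GRcirc.bbnec ih)
  | boxElim _ ih => exact GRcirc.of_box_box ih

/-- For any `L₂`-formula `A`, `GR ⊢ A` iff `GR° ⊢ □A`. -/
theorem GR_iff_GRcirc_box (A : Formula) : GR A ↔ GRcirc A.box :=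
  ⟨GR.GRcirc_box, fun h => GR.boxElim h.toGR⟩
end

section
/- For any formula A of the bimodal language L₂, if GR° ⊢ A, then A is valid on all GR°-frames (i.e., A holds at every world under every satisfaction relation on every GR°-frame). -/
/-- A `GR°`-frame: a nonempty set of worlds `W`, a transitive conversely
well-founded relation `⊏` (`lt`), and for each formula `B` a relation
`≺_B` (`prec B`) satisfying the four frame conditions. -/
structure GRFrame where
  W : Type
  nonempty : Nonempty W
  lt : W → W → Prop
  lt_trans : ∀ {x y z : W}, lt x y → lt y z → lt x z
  /-- `⊏` is conversely well-founded. -/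
  cwf : WellFounded (fun x y : W => lt y x)
  prec : Formula → W → W → Prop
  lt_to_prec : ∀ {B : Formula} {x y : W}, lt x y → prec B x y
  lt_prec_lt : ∀ {B : Formula} {x y z : W}, lt x y → prec B y z → lt x z
  prec_lt_lt : ∀ {B : Formula} {x y z : W}, prec B x y → lt x z → lt x y
  lt_succ : ∀ {B : Formula} {x y : W}, lt x y → ∃ z : W, prec B y z ∧ lt x z

/-- A satisfaction relation on a `GR°`-frame. -/
structure GRSat (F : GRFrame) where
  frc : F.W → Formula → Prop
  frc_falsum : ∀ w : F.W, ¬ frc w Formula.falsum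
  frc_neg : ∀ (w : F.W) (A : Formula), frc w A.neg ↔ ¬ frc w A
  frc_or : ∀ (w : F.W) (A B : Formula), frc w (A.or B) ↔ (frc w A ∨ frc w B)
  frc_box : ∀ (w : F.W) (B : Formula), frc w B.box ↔ ∀ x : F.W, F.lt w x → frc x B
  frc_bb : ∀ (w : F.W) (B : Formula), frc w B.bb ↔ ∀ x : F.W, F.prec B w x → frc x B

/-- `A` is valid on the frame `F`: it holds at every world under every
satisfaction relation on `F`. -/
def ValidOn (F : GRFrame) (A : Formula) : Prop :=
  ∀ (S : GRSat F) (w : F.W), S.frc w A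

/-- A frame is non-trivial iff it has a root `r` (w.r.t. `⊏`) and some world `w ≠ r`. -/
def GRFrame.NonTrivial (F : GRFrame) : Prop :=
  ∃ r w : F.W, (∀ x : F.W, x ≠ r → F.lt r x) ∧ r ≠ w

/-- A frame is `■`-serial iff every `≺_B` is serial. -/
def GRFrame.Serial (F : GRFrame) : Prop :=
  ∀ (B : Formula) (x : F.W), ∃ y : F.W, F.prec B x y

/-!
Soundness is proved by induction on derivations. Propositional tautologies hold because a
satisfaction relation, read at a single world, is a propositional valuation in which `□`- and
`■`-formulas are atoms. Löb's axiom holds by well-founded induction along the converse of `⊏`.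
Each of the four remaining axioms is exactly one of the frame conditions (i)–(iv), and the rules
preserve validity since truth everywhere on the frame is stable under `□` and `■`.
-/

namespace GRSat

variable {F : GRFrame} (S : GRSat F)

theorem frc_imp (w : F.W) (A B : Formula) :
    S.frc w (A.imp B) ↔ (S.frc w A → S.frc w B) := by
  rw [Formula.imp, S.frc_or, S.frc_neg]
  tauto

theorem frc_dia (w : F.W) (A : Formula) :
    S.frc w A.dia ↔ ∃ x, F.lt w x ∧ S.frc x A := by
  simp only [Formula.dia, S.frc_neg, S.frc_box, not_forall, not_not, exists_prop]

open Classical in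
theorem evalProp_frc (w : F.W) (A : Formula) :
    evalProp (fun C => decide (S.frc w C)) A = decide (S.frc w A) := by
  induction A with
  | var n => rfl
  | falsum => simp [evalProp, S.frc_falsum w]
  | neg A ih => simp [evalProp, S.frc_neg, ih]
  | or A B ihA ihB => simp [evalProp, S.frc_or, ihA, ihB]
  | box A => rfl
  | bb A => rfl

theorem frc_of_taut {A : Formula} (hA : Taut A) (w : F.W) : S.frc w A := by
  classical
  simpa [evalProp_frc] using hA (fun C => decide (S.frc w C))

theorem frc_k (w : F.W) (A B : Formula) :
    S.frc w (((A.imp B).box).imp ((A.box).imp (B.box))) := by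
  simp only [frc_imp, S.frc_box]
  exact fun hAB hA x hx => hAB x hx (hA x hx)

theorem frc_loeb (w : F.W) (A : Formula) :
    S.frc w ((((A.box).imp A).box).imp (A.box)) := by
  simp only [frc_imp, S.frc_box]
  intro hLoeb x
  induction x using F.cwf.induction with
  | _ x ih =>
    intro hwx
    exact hLoeb x hwx fun z hxz => ih z hxz (F.lt_trans hwx hxz)

theorem frc_bbBox (w : F.W) (A : Formula) : S.frc w ((A.bb).imp (A.box)) := by
  simp only [frc_imp, S.frc_box, S.frc_bb]
  exact fun h x hx => h x (F.lt_to_prec hx)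

theorem frc_boxBb (w : F.W) (A : Formula) : S.frc w ((A.box).imp ((A.bb).box)) := by
  simp only [frc_imp, S.frc_box, S.frc_bb]
  exact fun h x hx y hy => h y (F.lt_prec_lt hx hy)

theorem frc_ros (w : F.W) (A : Formula) :
    S.frc w ((A.box).imp ((Formula.falsum.box).or (A.bb))) := by
  rw [frc_imp, S.frc_or]
  intro hA
  by_cases hDead : S.frc w Formula.falsum.box
  · exact Or.inl hDead
  · obtain ⟨x, hx, -⟩ : ∃ x, F.lt w x ∧ ¬S.frc x Formula.falsum := by
      simpa [S.frc_box] using hDead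
    rw [S.frc_box] at hA
    exact Or.inr ((S.frc_bb w A).mpr fun y hy => hA y (F.prec_lt_lt hy hx))

theorem frc_diaBb (w : F.W) (A : Formula) : S.frc w (((A.bb).dia).imp (A.dia)) := by
  simp only [frc_imp, frc_dia, S.frc_bb]
  rintro ⟨x, hx, hA⟩
  obtain ⟨z, hxz, hwz⟩ := F.lt_succ (B := A) hx
  exact ⟨z, hwz, hA z hxz⟩

end GRSat

namespace ValidOn

variable {F : GRFrame} {A B : Formula}

theorem mp (hAB : ValidOn F (A.imp B)) (hA : ValidOn F A) : ValidOn F B :=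
  fun S w => (S.frc_imp w A B).mp (hAB S w) (hA S w)

theorem box (hA : ValidOn F A) : ValidOn F A.box :=
  fun S w => (S.frc_box w A).mpr fun x _ => hA S x

theorem bb (hA : ValidOn F A) : ValidOn F A.bb :=
  fun S w => (S.frc_bb w A).mpr fun x _ => hA S x

end ValidOn

/-- Soundness: every theorem of `GR°` is valid on all `GR°`-frames. -/
theorem GRcirc_sound (A : Formula) (h : GRcirc A) : ∀ F : GRFrame, ValidOn F A := by
  intro F
  induction h with
  | taut hA => exact fun S => S.frc_of_taut hA
  | k => exact fun S w => S.frc_k w _ _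
  | loeb => exact fun S w => S.frc_loeb w _
  | bbBox => exact fun S w => S.frc_bbBox w _
  | boxBb => exact fun S w => S.frc_boxBb w _
  | ros => exact fun S w => S.frc_ros w _
  | diaBb => exact fun S w => S.frc_diaBb w _
  | mp _ _ ihAB ihA => exact ihAB.mp ihA
  | nec _ ih => exact ih.box
  | bbnec _ ih => exact ih.bb
end

section
/- For every formula B of the bimodal language L₂, the formula ■B is not a theorem of GR⁻. -/
/-- The logic GRminus. -/
inductive GRminus : Formula → Prop
  | taut {A : Formula} : Taut A → GRminus A
  | k {A B : Formula} : GRminus (((A.imp B).box).imp ((A.box).imp (B.box)))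
  | loeb {A : Formula} : GRminus ((((A.box).imp A).box).imp (A.box))
  | bbBox {A : Formula} : GRminus ((A.bb).imp (A.box))
  | boxBb {A : Formula} : GRminus ((A.box).imp ((A.bb).box))
  | ros {A : Formula} : GRminus ((A.box).imp ((Formula.falsum.box).or (A.bb)))
  | diaBb {A : Formula} : GRminus (((A.bb).dia).imp (A.dia))
  | mp {A B : Formula} : GRminus (A.imp B) → GRminus A → GRminus B
  | nec {A : Formula} : GRminus A → GRminus (A.box)


/-- Truth at a world with no successors, with `■` read as falsity. -/
def deadEndEval : Formula → Bool
  | .var _ => true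
  | .falsum => false
  | .neg A => !(deadEndEval A)
  | .or A B => deadEndEval A || deadEndEval B
  | .box _ => true
  | .bb _ => false

@[simp]
lemma deadEndEval_imp (A B : Formula) :
    deadEndEval (A.imp B) = (!deadEndEval A || deadEndEval B) := rfl

lemma evalProp_deadEndEval (A : Formula) : evalProp deadEndEval A = deadEndEval A := by
  induction A with
  | neg A ih => simp only [evalProp, deadEndEval, ih]
  | or A B ihA ihB => simp only [evalProp, deadEndEval, ihA, ihB]
  | _ => rfl

/-- Soundness of `GR⁻` for the one-world model: every axiom instance has a true consequent
or a false antecedent there, since `□C` is true and `■C`, `◇C` are false. -/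
theorem GRminus.deadEndEval_eq_true {A : Formula} (h : GRminus A) : deadEndEval A = true := by
  induction h with
  | taut hA => rw [← evalProp_deadEndEval]; exact hA deadEndEval
  | mp _ _ ihAB ihA => simpa [ihA] using ihAB
  | nec _ _ => rfl
  | _ => simp [Formula.dia, deadEndEval]

/-- For every `L₂`-formula `B`, `■B` is not a theorem of `GR⁻`. -/
theorem GRminus_not_bb (B : Formula) : ¬ GRminus (B.bb) := by
  intro h
  exact Bool.false_ne_true h.deadEndEval_eq_true
end

section
/- For every formula B of the bimodal language L₂, the formula ¬■B is not a theorem of GR°. -/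
/-! Reading every formula `□A` and `■A` as `⊤` is a propositional interpretation of `GR°`:
each axiom then has a true consequent, except `◇■A → ◇A`, whose antecedent and consequent
are both false, and the rules preserve truth. Under it `¬■B` is false. -/

theorem GRcirc.evalProp_eq_true {v : Formula → Bool} (hbox : ∀ A : Formula, v A.box = true)
    (hbb : ∀ A : Formula, v A.bb = true) {A : Formula} (h : GRcirc A) : evalProp v A = true := by
  induction h with
  | taut hA => exact hA v
  | k | loeb | bbBox | boxBb | ros => simp [Formula.imp, evalProp, hbox, hbb]
  | diaBb => simp [Formula.imp, Formula.dia, evalProp, hbox]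
  | mp _ _ ihImp ihA => simpa [Formula.imp, evalProp, ihA] using ihImp
  | nec => exact hbox _
  | bbnec => exact hbb _

/-- For every `L₂`-formula `B`, `¬■B` is not a theorem of `GR°`. -/
theorem GRcirc_not_neg_bb (B : Formula) : ¬ GRcirc ((B.bb).neg) := by
  intro h
  have hfalse := GRcirc.evalProp_eq_true (v := fun _ => true) (fun _ => rfl) (fun _ => rfl) h
  simp [evalProp] at hfalse
end

section
/- GR° is a conservative extension of N: for any formula A of the ■-fragment L_■ (built from propositional variables, ⊥, ¬, ∨ and ■ only), if GR° ⊢ A then N ⊢ A. -/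
/-- `A` belongs to the `■`-fragment `L_■`: it contains no `□`. -/
def BoxFree : Formula → Prop
  | .var _ => True
  | .falsum => True
  | .neg A => BoxFree A
  | .or A B => BoxFree A ∧ BoxFree B
  | .box _ => False
  | .bb A => BoxFree A

/-- The pure logic of necessitation `N` in the language `L_■`:
all propositional tautologies of `L_■`, modus ponens, and `■`-necessitation. -/
inductive NLogic : Formula → Prop
  | taut {A : Formula} : Taut A → BoxFree A → NLogic A
  | mp {A B : Formula} : NLogic (A.imp B) → NLogic A → NLogic B
  | bbnec {A : Formula} : NLogic A → NLogic (A.bb)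

/-! Erasing `□` — replacing every subformula `□B` by `⊤` — turns each axiom of `GR°` that
mentions `□` into a propositional tautology, maps tautologies to tautologies, commutes with
modus ponens and `■`-necessitation, and sends `□`-necessitation to `⊤`. Hence it maps
theorems of `GR°` to theorems of `N`, and it fixes every formula of `L_■`. -/

def eraseBox : Formula → Formula
  | .var n => .var n
  | .falsum => .falsum
  | .neg A => (eraseBox A).neg
  | .or A B => (eraseBox A).or (eraseBox B)
  | .box _ => Formula.falsum.neg
  | .bb A => (eraseBox A).bb

theorem boxFree_eraseBox (A : Formula) : BoxFree (eraseBox A) := by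
  induction A <;> simp_all [eraseBox, BoxFree]

theorem eraseBox_eq_self {A : Formula} (h : BoxFree A) : eraseBox A = A := by
  induction A <;> simp_all [eraseBox, BoxFree]

theorem evalProp_eraseBox (v : Formula → Bool) (A : Formula) :
    evalProp v (eraseBox A) = evalProp (fun B => evalProp v (eraseBox B)) A := by
  induction A <;> simp_all [eraseBox, evalProp]

theorem Taut.eraseBox {A : Formula} (h : Taut A) : Taut (eraseBox A) := fun v => by
  rw [evalProp_eraseBox]
  exact h _

theorem NLogic.eraseBox_of_taut {A : Formula} (h : Taut (eraseBox A)) :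
    NLogic (eraseBox A) :=
  NLogic.taut h (boxFree_eraseBox A)

theorem GRcirc.nlogic_eraseBox {A : Formula} (h : GRcirc A) : NLogic (eraseBox A) := by
  induction h with
  | taut ht => exact .eraseBox_of_taut ht.eraseBox
  | mp _ _ ihAB ihA => exact ihAB.mp ihA
  | bbnec _ ih => exact ih.bbnec
  | _ => exact .eraseBox_of_taut fun v => by simp [eraseBox, Formula.imp, Formula.dia, evalProp]

/-- `GR°` is a conservative extension of `N`. -/
theorem GRcirc_conservative_over_N (A : Formula) (hA : BoxFree A) (h : GRcirc A) :
    NLogic A :=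
  eraseBox_eq_self hA ▸ h.nlogic_eraseBox
end

section
/- The logic GL enjoys the Lyndon interpolation property: for any formulas A and B of the unimodal language L_□, if GL ⊢ A → B, then there exists a formula C with v⁺(C) ⊆ v⁺(A) ∩ v⁺(B), v⁻(C) ⊆ v⁻(A) ∩ v⁻(B), GL ⊢ A → C and GL ⊢ C → B. -/
/-- Formulas of the unimodal language `L_□`. -/
inductive PFormula : Type
  | var : ℕ → PFormula
  | falsum : PFormula
  | neg : PFormula → PFormula
  | or : PFormula → PFormula → PFormula
  | box : PFormula → PFormula

namespace PFormula
/-- `A → B` is defined as `¬A ∨ B`. -/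
def imp (A B : PFormula) : PFormula := (A.neg).or B
end PFormula

/-- Propositional evaluation: variables and `□`-formulas are atoms. -/
def evalP (v : PFormula → Bool) : PFormula → Bool
  | .var n => v (.var n)
  | .falsum => false
  | .neg A => !(evalP v A)
  | .or A B => evalP v A || evalP v B
  | .box A => v (.box A)

/-- Propositional tautologies of `L_□`. -/
def PTaut (A : PFormula) : Prop := ∀ v : PFormula → Bool, evalP v A = true

/-- The provability logic `GL`. -/
inductive GLLogic : PFormula → Prop
  | taut {A : PFormula} : PTaut A → GLLogic A
  | k {A B : PFormula} : GLLogic (((A.imp B).box).imp ((A.box).imp (B.box)))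
  | loeb {A : PFormula} : GLLogic ((((A.box).imp A).box).imp (A.box))
  | mp {A B : PFormula} : GLLogic (A.imp B) → GLLogic A → GLLogic B
  | nec {A : PFormula} : GLLogic A → GLLogic (A.box)

/-- `PS A true = S⁺(A)`, `PS A false = S⁻(A)`. -/
def PS : PFormula → Bool → Set PFormula
  | .var n, b => if b then {PFormula.var n} else ∅
  | .falsum, b => if b then {PFormula.falsum} else ∅
  | .neg A, b => PS A (!b) ∪ (if b then {PFormula.neg A} else ∅)
  | .or A B, b => PS A b ∪ PS B b ∪ (if b then {PFormula.or A B} else ∅)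
  | .box A, b => PS A b ∪ (if b then {PFormula.box A} else ∅)

/-- Positively occurring variables. -/
def pvpos (A : PFormula) : Set ℕ := {n | PFormula.var n ∈ PS A true}
/-- Negatively occurring variables. -/
def pvneg (A : PFormula) : Set ℕ := {n | PFormula.var n ∈ PS A false}


/-!
Maehara's method, run semantically. Call a pair of finite sets of premises `(Γ; Δ)` separable
if some `C` whose positive and negative variables lie in those of both `A` and `B` follows from
`Γ` while `¬C` follows from `Δ`. If `A → B` had no interpolant, `({A}; {¬B})` would be
inseparable. Inseparable pairs of signed subformulas of `A` and of `B` extend to saturated ones,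
and these form a Hintikka model: a world `w'` is accessible from `w` if it inherits every `□E`
and `E` with `□E` true in `w` and assumes strictly more diagonal formulas `□D`. A false `□D`
is realised by a successor that assumes `¬D` and `□D`, and Löb's axiom shows that this
successor is still inseparable. The accessibility relation is transitive and conversely
well-founded, so GL is sound on it, yet the world containing `A` and `¬B` refutes `A → B`.
-/

deriving instance DecidableEq for PFormula

namespace PFormula

def and (a b : PFormula) : PFormula := (a.neg.or b.neg).neg

noncomputable def conj (Γ : Finset PFormula) : PFormula := Γ.toList.foldr PFormula.and falsum.neg

end PFormula

open PFormula

section Evaluation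

variable (v : PFormula → Bool) (a b : PFormula)

@[simp] lemma evalP_falsum : evalP v falsum = false := rfl
@[simp] lemma evalP_neg : evalP v a.neg = !evalP v a := rfl
@[simp] lemma evalP_or : evalP v (a.or b) = (evalP v a || evalP v b) := rfl
@[simp] lemma evalP_imp : evalP v (a.imp b) = (!evalP v a || evalP v b) := rfl
@[simp] lemma evalP_and : evalP v (a.and b) = (evalP v a && evalP v b) := by
  simp [PFormula.and]

@[simp] lemma evalP_conj (Γ : Finset PFormula) :
    evalP v (conj Γ) = decide (∀ x ∈ Γ, evalP v x = true) := by
  rw [conj]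
  simp_rw [← Finset.mem_toList]
  induction Γ.toList <;> simp_all

end Evaluation

lemma GLLogic.of_entails {H : List PFormula} {c : PFormula} (hH : ∀ x ∈ H, GLLogic x)
    (h : ∀ v, (∀ x ∈ H, evalP v x = true) → evalP v c = true) : GLLogic c := by
  induction H generalizing c with
  | nil => exact GLLogic.taut fun v => h v (by simp)
  | cons x H ih =>
    refine GLLogic.mp (ih (c := x.imp c) (fun y hy => hH y (by simp [hy])) fun v hv => ?_)
      (hH x (by simp))
    cases hx : evalP v x <;> simp_all

def Derives (Γ : Finset PFormula) (c : PFormula) : Prop := GLLogic ((conj Γ).imp c)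

namespace Derives

variable {Γ Δ : Finset PFormula} {a b c : PFormula}

lemma of_entails {H : List PFormula} (hH : ∀ x ∈ H, Derives Γ x)
    (h : ∀ v, (∀ x ∈ H, evalP v x = true) → evalP v c = true) : Derives Γ c :=
  GLLogic.of_entails (H := H.map ((conj Γ).imp ·)) (by simpa [Derives] using hH) fun v hv => by
    simp at hv ⊢; grind

lemma of_theorem (h : GLLogic c) : Derives Γ c :=
  GLLogic.of_entails (H := [c]) (by simpa using h) fun v => by simp; grind

lemma of_mem (h : c ∈ Γ) : Derives Γ c :=
  GLLogic.taut fun v => by simp; grind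

lemma cut (hΔ : ∀ x ∈ Δ, Derives Γ x) (h : Derives Δ c) : Derives Γ c :=
  of_entails (H := [conj Δ, (conj Δ).imp c]) (by
    simp only [List.mem_cons, List.not_mem_nil, or_false, forall_eq_or_imp, forall_eq]
    exact ⟨of_entails (H := Δ.toList) (by simpa using hΔ) (by simp), of_theorem h⟩)
    fun v => by simp; grind

lemma mono (hΓ : Γ ⊆ Δ) (h : Derives Γ c) : Derives Δ c :=
  cut (fun _ hx => of_mem (hΓ hx)) h

lemma imp_intro (h : Derives (insert a Γ) c) : Derives Γ (a.imp c) :=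
  GLLogic.of_entails (H := [(conj (insert a Γ)).imp c]) (by simpa [Derives] using h) fun v hv => by
    simp at hv ⊢; grind

lemma mp (hab : Derives Γ (a.imp b)) (ha : Derives Γ a) : Derives Γ b :=
  of_entails (H := [a.imp b, a]) (by simp [hab, ha]) fun v => by simp; grind

lemma box_image (h : Derives Γ c) : Derives (Γ.image box) c.box := by
  induction Γ using Finset.induction_on generalizing c with
  | empty =>
    have hc : GLLogic c := GLLogic.of_entails (H := [(conj ∅).imp c]) (by simpa [Derives] using h)
      fun v => by simp
    exact of_theorem (GLLogic.nec hc)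
  | insert a Γ _ ih =>
    have hbox : Derives (Γ.image box) (a.imp c).box := ih h.imp_intro
    rw [Finset.image_insert]
    exact of_entails (H := [(a.imp c).box, ((a.imp c).box).imp (a.box.imp c.box), a.box])
      (by simp [(hbox.mono (Finset.subset_insert _ _)), of_theorem GLLogic.k, of_mem])
      fun v => by simp; grind

lemma loeb (h : Derives (insert c.box Γ) c) : Derives (Γ.image box) c.box :=
  of_entails (H := [(c.box.imp c).box, (c.box.imp c).box.imp c.box])
    (by simp [h.imp_intro.box_image, of_theorem GLLogic.loeb]) fun v => by simp; grind

end Derives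

lemma derives_singleton_iff {a b : PFormula} : Derives {a} b ↔ GLLogic (a.imp b) := by
  constructor <;> intro h <;>
    exact GLLogic.of_entails (H := [_]) (by simpa [Derives] using h) fun v => by simp

lemma GLLogic.box_mono {a b : PFormula} (h : GLLogic (a.imp b)) : GLLogic (a.box.imp b.box) :=
  derives_singleton_iff.1 (by simpa using (derives_singleton_iff.2 h).box_image)

lemma GLLogic.box_four (a : PFormula) : GLLogic (a.box.imp a.box.box) := by
  have hb : Derives (insert (a.and a.box).box {a}) (a.and a.box) := by
    have ha : GLLogic ((a.and a.box).box.imp a.box) :=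
      GLLogic.box_mono (GLLogic.taut fun v => by simp; grind)
    exact Derives.of_entails (H := [a, (a.and a.box).box, (a.and a.box).box.imp a.box])
      (by simp [Derives.of_mem, Derives.of_theorem ha]) fun v => by simp; grind
  have hba : GLLogic ((a.and a.box).box.imp a.box.box) :=
    GLLogic.box_mono (GLLogic.taut fun v => by simp; grind)
  exact derives_singleton_iff.1 ((Derives.of_theorem hba).mp (by simpa using hb.loeb))

section Polarity

variable (a b : PFormula) (n : ℕ)

@[simp] lemma pvpos_var : pvpos (var n) = {n} := by ext; simp [pvpos, PS]
@[simp] lemma pvneg_var : pvneg (var n) = ∅ := by ext; simp [pvneg, PS]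
@[simp] lemma pvpos_falsum : pvpos falsum = ∅ := by ext; simp [pvpos, PS]
@[simp] lemma pvneg_falsum : pvneg falsum = ∅ := by ext; simp [pvneg, PS]
@[simp] lemma pvpos_neg : pvpos a.neg = pvneg a := by ext; simp [pvpos, pvneg, PS]
@[simp] lemma pvneg_neg : pvneg a.neg = pvpos a := by ext; simp [pvpos, pvneg, PS]
@[simp] lemma pvpos_or : pvpos (a.or b) = pvpos a ∪ pvpos b := by ext; simp [pvpos, PS]
@[simp] lemma pvneg_or : pvneg (a.or b) = pvneg a ∪ pvneg b := by ext; simp [pvneg, PS]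
@[simp] lemma pvpos_box : pvpos a.box = pvpos a := by ext; simp [pvpos, PS]
@[simp] lemma pvneg_box : pvneg a.box = pvneg a := by ext; simp [pvneg, PS]

end Polarity

def Separable (P N : Set ℕ) (Γ Δ : Finset PFormula) : Prop :=
  ∃ C : PFormula, pvpos C ⊆ P ∧ pvneg C ⊆ N ∧ Derives Γ C ∧ Derives Δ C.neg

namespace Separable

variable {P N : Set ℕ} {Γ Δ Γ' Δ' : Finset PFormula} {F G D : PFormula}

lemma symm : Separable P N Γ Δ → Separable N P Δ Γ
  | ⟨C, hP, hN, hΓ, hΔ⟩ =>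
    ⟨C.neg, by simpa, by simpa, hΔ,
      Derives.of_entails (H := [C]) (by simpa) fun v => by simp⟩

lemma of_inconsistent_left (h : Derives Γ falsum) : Separable P N Γ Δ :=
  ⟨falsum, by simp, by simp, h, Derives.of_theorem (GLLogic.taut fun v => by simp)⟩

lemma of_inconsistent_right (h : Derives Δ falsum) : Separable P N Γ Δ :=
  (of_inconsistent_left h).symm

lemma of_var {n : ℕ} (hΓ : var n ∈ Γ) (hΔ : (var n).neg ∈ Δ) (hP : n ∈ P) :
    Separable P N Γ Δ :=
  ⟨var n, by simpa, by simp, Derives.of_mem hΓ, Derives.of_mem hΔ⟩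

lemma of_cut_left (hF : Derives Γ F) : Separable P N (insert F Γ) Δ → Separable P N Γ Δ
  | ⟨C, hP, hN, hC, hC'⟩ => ⟨C, hP, hN, hC.imp_intro.mp hF, hC'⟩

lemma of_or_left (hFG : F.or G ∈ Γ) (hF : Separable P N (insert F Γ) Δ)
    (hG : Separable P N (insert G Γ) Δ) : Separable P N Γ Δ := by
  obtain ⟨C₁, hP₁, hN₁, hΓ₁, hΔ₁⟩ := hF
  obtain ⟨C₂, hP₂, hN₂, hΓ₂, hΔ₂⟩ := hG
  refine ⟨C₁.or C₂, by simp [hP₁, hP₂], by simp [hN₁, hN₂], ?_, ?_⟩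
  · exact Derives.of_entails (H := [F.or G, F.imp C₁, G.imp C₂])
      (by simp [Derives.of_mem hFG, hΓ₁.imp_intro, hΓ₂.imp_intro]) fun v => by simp; grind
  · exact Derives.of_entails (H := [C₁.neg, C₂.neg]) (by simp [hΔ₁, hΔ₂])
      fun v => by simp

/-- If `C` separates the successor pair that realises `¬□D`, then `¬□¬C` separates the current
pair; Löb's axiom is what lets the successor assume `□D` besides `¬D`. -/
lemma of_diamond_left (hD : D.box.neg ∈ Γ) (hΓ' : ∀ x ∈ Γ', Derives Γ x.box)
    (hΔ' : ∀ x ∈ Δ', Derives Δ x.box)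
    (h : Separable P N (insert D.box (insert D.neg Γ')) Δ') :
    Separable P N Γ Δ := by
  obtain ⟨C, hP, hN, hC, hC'⟩ := h
  have hDC : Derives (insert D.box Γ') (D.neg.imp C) :=
    (hC.mono (Finset.insert_comm _ _ _).subset).imp_intro
  have hD' : Derives (insert D.box (insert C.neg Γ')) D :=
    Derives.of_entails (H := [D.neg.imp C, C.neg]) (by
      simp [Derives.of_mem, hDC.mono (Finset.insert_subset_insert _ (Finset.subset_insert _ _))])
      fun v => by simp; grind
  have hbox : Derives (insert C.neg.box Γ) D.box := by
    refine Derives.cut ?_ hD'.loeb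
    simp only [Finset.image_insert, Finset.forall_mem_insert, Finset.forall_mem_image]
    exact ⟨Derives.of_mem (Finset.mem_insert_self _ _),
      fun x hx => (hΓ' x hx).mono (Finset.subset_insert _ _)⟩
  refine ⟨C.neg.box.neg, by simpa, by simpa, ?_, ?_⟩
  · exact Derives.of_entails (H := [C.neg.box.imp D.box, D.box.neg])
      (by simp [hbox.imp_intro, Derives.of_mem hD]) fun v => by simp; grind
  · have : Derives Δ C.neg.box := Derives.cut (by simpa using hΔ') hC'.box_image
    exact Derives.of_entails (H := [C.neg.box]) (by simpa) fun v => by simp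

lemma exists_interpolant {A B : PFormula} (h : Separable P N {A} {B.neg}) :
    ∃ C, pvpos C ⊆ P ∧ pvneg C ⊆ N ∧ GLLogic (A.imp C) ∧ GLLogic (C.imp B) := by
  obtain ⟨C, hP, hN, hA, hB⟩ := h
  refine ⟨C, hP, hN, derives_singleton_iff.1 hA, ?_⟩
  exact GLLogic.of_entails (H := [B.neg.imp C.neg]) (by simpa using derives_singleton_iff.1 hB)
    fun v => by simp; grind

end Separable

abbrev SForm := PFormula × Bool

def SForm.toFormula (p : SForm) : PFormula := if p.2 then p.1 else p.1.neg

@[simp] lemma SForm.toFormula_true (F : PFormula) : SForm.toFormula (F, true) = F := rfl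
@[simp] lemma SForm.toFormula_false (F : PFormula) : SForm.toFormula (F, false) = F.neg := rfl

def signedSubformulas : PFormula → Bool → Finset SForm
  | .var n, s => {(.var n, s)}
  | .falsum, s => {(.falsum, s)}
  | .neg F, s => insert (.neg F, s) (signedSubformulas F (!s))
  | .or F G, s => insert (.or F G, s) (signedSubformulas F s ∪ signedSubformulas G s)
  | .box F, s => insert (.box F, s) (signedSubformulas F s)

lemma mem_signedSubformulas_self (F : PFormula) (s : Bool) : (F, s) ∈ signedSubformulas F s := by
  cases F <;> simp [signedSubformulas]

lemma signedSubformulas_subset {F G : PFormula} {s t : Bool}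
    (h : (G, t) ∈ signedSubformulas F s) :
    signedSubformulas G t ⊆ signedSubformulas F s := by
  induction F generalizing s with
  | var n => simp_all [signedSubformulas]
  | falsum => simp_all [signedSubformulas]
  | neg F ih =>
    simp only [signedSubformulas, Finset.mem_insert, Prod.mk.injEq] at h ⊢
    rcases h with ⟨rfl, rfl⟩ | h
    · exact subset_rfl
    · exact (ih h).trans (Finset.subset_insert _ _)
  | or F₁ F₂ ih₁ ih₂ =>
    simp only [signedSubformulas, Finset.mem_insert, Finset.mem_union, Prod.mk.injEq] at h ⊢
    rcases h with ⟨rfl, rfl⟩ | h | h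
    · exact subset_rfl
    · exact (ih₁ h).trans (Finset.subset_union_left.trans (Finset.subset_insert _ _))
    · exact (ih₂ h).trans (Finset.subset_union_right.trans (Finset.subset_insert _ _))
  | box F ih =>
    simp only [signedSubformulas, Finset.mem_insert, Prod.mk.injEq] at h ⊢
    rcases h with ⟨rfl, rfl⟩ | h
    · exact subset_rfl
    · exact (ih h).trans (Finset.subset_insert _ _)

lemma mem_PS_of_mem_signedSubformulas {F G : PFormula} {s t : Bool}
    (h : (G, t) ∈ signedSubformulas F s) : G ∈ PS F (t == s) := by
  induction F generalizing s with
  | var n => simp_all [signedSubformulas, PS]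
  | falsum => simp_all [signedSubformulas, PS]
  | neg F ih =>
    simp only [signedSubformulas, Finset.mem_insert, Prod.mk.injEq] at h
    rcases h with ⟨rfl, rfl⟩ | h
    · simp [PS]
    · have := ih h
      cases s <;> cases t <;> simp_all [PS]
  | or F₁ F₂ ih₁ ih₂ =>
    simp only [signedSubformulas, Finset.mem_insert, Finset.mem_union, Prod.mk.injEq] at h
    rcases h with ⟨rfl, rfl⟩ | h | h
    · simp [PS]
    · simp [PS, ih₁ h]
    · simp [PS, ih₂ h]
  | box F ih =>
    simp only [signedSubformulas, Finset.mem_insert, Prod.mk.injEq] at h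
    rcases h with ⟨rfl, rfl⟩ | h
    · simp [PS]
    · simp [PS, ih h]

def SubformulaClosed (U : Finset SForm) : Prop := ∀ p ∈ U, signedSubformulas p.1 p.2 ⊆ U

lemma subformulaClosed_signedSubformulas (F : PFormula) (s : Bool) :
    SubformulaClosed (signedSubformulas F s) :=
  fun _ hp => signedSubformulas_subset hp

namespace SubformulaClosed

variable {U : Finset SForm} {F G : PFormula} {s : Bool}

lemma of_neg (hU : SubformulaClosed U) (h : (F.neg, s) ∈ U) : (F, !s) ∈ U :=
  hU _ h (by simp [signedSubformulas, mem_signedSubformulas_self])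

lemma of_or_left (hU : SubformulaClosed U) (h : (F.or G, s) ∈ U) : (F, s) ∈ U :=
  hU _ h (by simp [signedSubformulas, mem_signedSubformulas_self])

lemma of_or_right (hU : SubformulaClosed U) (h : (F.or G, s) ∈ U) : (G, s) ∈ U :=
  hU _ h (by simp [signedSubformulas, mem_signedSubformulas_self])

lemma of_box (hU : SubformulaClosed U) (h : (F.box, s) ∈ U) : (F, s) ∈ U :=
  hU _ h (by simp [signedSubformulas, mem_signedSubformulas_self])

end SubformulaClosed

def premises (Γ : Finset SForm) (Θ : Finset PFormula) : Finset PFormula :=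
  Γ.image SForm.toFormula ∪ Θ.image box

section Premises

variable {Γ : Finset SForm} {Θ : Finset PFormula}

lemma toFormula_mem_premises {p : SForm} (h : p ∈ Γ) : p.toFormula ∈ premises Γ Θ :=
  Finset.mem_union_left _ (Finset.mem_image_of_mem _ h)

lemma box_mem_premises {D : PFormula} (h : D ∈ Θ) : D.box ∈ premises Γ Θ :=
  Finset.mem_union_right _ (Finset.mem_image_of_mem _ h)

lemma premises_insert_left (p : SForm) :
    premises (insert p Γ) Θ = insert p.toFormula (premises Γ Θ) := by
  simp [premises, Finset.insert_union]

lemma premises_insert_right (D : PFormula) :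
    premises Γ (insert D Θ) = insert D.box (premises Γ Θ) := by
  simp [premises, Finset.union_insert]

end Premises

structure Saturated (X : Finset SForm) : Prop where
  neg : ∀ F s, (PFormula.neg F, s) ∈ X → (F, !s) ∈ X
  or_true : ∀ F G, (PFormula.or F G, true) ∈ X → (F, true) ∈ X ∨ (G, true) ∈ X
  or_false : ∀ F G, (PFormula.or F G, false) ∈ X → (F, false) ∈ X ∧ (G, false) ∈ X

lemma Saturated.union {X Y : Finset SForm} (hX : Saturated X) (hY : Saturated Y) :
    Saturated (X ∪ Y) where
  neg F s := by simp only [Finset.mem_union]; exact Or.imp (hX.neg F s) (hY.neg F s)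
  or_true F G := by
    simp only [Finset.mem_union]
    rintro (h | h)
    · exact (hX.or_true F G h).imp Or.inl Or.inl
    · exact (hY.or_true F G h).imp Or.inr Or.inr
  or_false F G := by
    simp only [Finset.mem_union]
    rintro (h | h)
    · exact (hX.or_false F G h).imp Or.inl Or.inl
    · exact (hY.or_false F G h).imp Or.inr Or.inr

section Saturation

variable {P N : Set ℕ} {U Γ₀ Γ : Finset SForm} {Θ Δ : Finset PFormula}

lemma saturated_of_maximal (hU : SubformulaClosed U) (hΓU : Γ ⊆ U)
    (hΓ : ¬ Separable P N (premises Γ Θ) Δ)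
    (hmax : ∀ p ∈ U, ¬ Separable P N (premises (insert p Γ) Θ) Δ → p ∈ Γ) :
    Saturated Γ := by
  have sep_insert :
      ∀ p ∈ U, p ∉ Γ → Separable P N (insert p.toFormula (premises Γ Θ)) Δ :=
    fun p hp hpΓ => by simpa [premises_insert_left] using mt (hmax p hp) hpΓ
  have mem_of_derives : ∀ p ∈ U, Derives (premises Γ Θ) p.toFormula → p ∈ Γ :=
    fun p hp hd => by_contra fun hpΓ => hΓ ((sep_insert p hp hpΓ).of_cut_left hd)
  have derives_of_mem : ∀ {q : SForm}, q ∈ Γ → Derives (premises Γ Θ) q.toFormula :=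
    fun h => Derives.of_mem (toFormula_mem_premises h)
  refine ⟨fun F s h => ?_, fun F G h => ?_, fun F G h => ⟨?_, ?_⟩⟩
  · refine mem_of_derives _ (hU.of_neg (hΓU h)) ?_
    exact Derives.of_entails (H := [SForm.toFormula (F.neg, s)]) (by simp [derives_of_mem h])
      fun v => by cases s <;> simp
  · by_contra hFG
    rw [not_or] at hFG
    exact hΓ (Separable.of_or_left (by simpa using toFormula_mem_premises (Θ := Θ) h)
      (sep_insert _ (hU.of_or_left (hΓU h)) hFG.1) (sep_insert _ (hU.of_or_right (hΓU h)) hFG.2))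
  · exact mem_of_derives _ (hU.of_or_left (hΓU h))
      (Derives.of_entails (H := [(F.or G).neg]) (by simpa using derives_of_mem h) fun v => by
        simp_all)
  · exact mem_of_derives _ (hU.of_or_right (hΓU h))
      (Derives.of_entails (H := [(F.or G).neg]) (by simpa using derives_of_mem h) fun v => by
        simp_all)

lemma exists_saturated (hU : SubformulaClosed U) (hΓ₀ : Γ₀ ⊆ U)
    (h : ¬ Separable P N (premises Γ₀ Θ) Δ) :
    ∃ Γ, Γ₀ ⊆ Γ ∧ Γ ⊆ U ∧ Saturated Γ ∧
      ¬ Separable P N (premises Γ Θ) Δ := by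
  classical
  let S := U.powerset.filter fun Γ => Γ₀ ⊆ Γ ∧ ¬ Separable P N (premises Γ Θ) Δ
  obtain ⟨Γ, hΓS, hmax⟩ := S.exists_max_image Finset.card ⟨Γ₀, by simp [S, hΓ₀, h]⟩
  simp only [S, Finset.mem_filter, Finset.mem_powerset] at hΓS hmax
  obtain ⟨hΓU, hΓ₀Γ, hΓ⟩ := hΓS
  refine ⟨Γ, hΓ₀Γ, hΓU, saturated_of_maximal hU hΓU hΓ fun p hp hsep => ?_, hΓ⟩
  by_contra hpΓ
  have := hmax (insert p Γ)
    ⟨Finset.insert_subset hp hΓU, hΓ₀Γ.trans (Finset.subset_insert _ _), hsep⟩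
  rw [Finset.card_insert_of_notMem hpΓ] at this
  omega

end Saturation

section Kripke

variable {W : Type*} (R : W → W → Prop) (val : W → ℕ → Prop)

def force : PFormula → W → Prop
  | .var n, w => val w n
  | .falsum, _ => False
  | .neg a, w => ¬ force a w
  | .or a b, w => force a w ∨ force b w
  | .box a, w => ∀ w', R w w' → force a w'

variable {R val}

lemma force_imp {a b : PFormula} {w : W} :
    force R val (a.imp b) w ↔ (force R val a w → force R val b w) := by
  simp only [PFormula.imp, force]
  tauto

theorem GLLogic.sound [IsTrans W R] (hwf : WellFounded (flip R)) {a : PFormula} (h : GLLogic a)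
    (w : W) : force R val a w := by
  induction h generalizing w with
  | @taut a h =>
    classical
    have key : ∀ F, evalP (fun G => decide (force R val G w)) F = true ↔ force R val F w := by
      intro F
      induction F <;> simp_all [evalP, force, Bool.eq_false_iff]
      all_goals exact decide_eq_true_iff
    exact (key a).1 (h _)
  | k => simp only [force_imp, force]; exact fun hab ha w' hw => hab w' hw (ha w' hw)
  | @loeb a =>
    rw [force_imp]
    intro hl w' hw
    induction w' using hwf.induction with
    | _ w' ih => exact force_imp.1 (hl w' hw) fun w'' hw' => ih w'' hw' (_root_.trans hw hw')
  | mp _ _ ih₁ ih₂ => exact force_imp.1 (ih₁ w) (ih₂ w)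
  | nec _ ih => exact fun w' _ => ih w'

end Kripke

structure IsHintikka {W : Type*} (R : W → W → Prop) (L : W → Finset SForm) : Prop where
  saturated : ∀ w, Saturated (L w)
  var_consistent : ∀ w n, (var n, true) ∈ L w → (var n, false) ∉ L w
  falsum_not_mem : ∀ w, (falsum, true) ∉ L w
  box_true : ∀ w w' F, R w w' → (F.box, true) ∈ L w → (F, true) ∈ L w'
  box_false : ∀ w F, (F.box, false) ∈ L w → ∃ w', R w w' ∧ (F, false) ∈ L w'

theorem IsHintikka.truth {W : Type*} {R : W → W → Prop} {L : W → Finset SForm}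
    (hL : IsHintikka R L) (F : PFormula) (w : W) :
    ((F, true) ∈ L w → force R (fun w n => (var n, true) ∈ L w) F w) ∧
      ((F, false) ∈ L w → ¬ force R (fun w n => (var n, true) ∈ L w) F w) := by
  induction F generalizing w with
  | var n => exact ⟨id, fun hf ht => hL.var_consistent w n ht hf⟩
  | falsum => exact ⟨fun h => hL.falsum_not_mem w h, fun _ h => h⟩
  | neg F ih =>
    exact ⟨fun h => (ih w).2 (hL.saturated w |>.neg F true h),
      fun h hF => hF ((ih w).1 (hL.saturated w |>.neg F false h))⟩
  | or F G ihF ihG =>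
    refine ⟨fun h => ?_, fun h hFG => ?_⟩
    · exact (hL.saturated w |>.or_true F G h).imp (ihF w).1 (ihG w).1
    · obtain ⟨hF, hG⟩ := hL.saturated w |>.or_false F G h
      exact hFG.elim ((ihF w).2 hF) ((ihG w).2 hG)
  | box F ih =>
    refine ⟨fun h w' hw => (ih w').1 (hL.box_true w w' F hw h), fun h hF => ?_⟩
    obtain ⟨w', hw, hw'⟩ := hL.box_false w F h
    exact (ih w').2 hw' (hF w' hw)

lemma IsHintikka.not_GLLogic_imp {W : Type*} {R : W → W → Prop} [IsTrans W R]
    (hwf : WellFounded (flip R)) {L : W → Finset SForm} (hL : IsHintikka R L) {w : W}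
    {A B : PFormula} (hA : (A, true) ∈ L w) (hB : (B, false) ∈ L w) : ¬ GLLogic (A.imp B) :=
  fun h => (hL.truth B w).2 hB (force_imp.1 (GLLogic.sound hwf h w) ((hL.truth A w).1 hA))

def boxPart (X : Finset SForm) : Finset SForm :=
  X.biUnion fun
    | (.box E, true) => {(E.box, true), (E, true)}
    | _ => ∅

lemma mem_boxPart {X : Finset SForm} {p : SForm} :
    p ∈ boxPart X ↔ ∃ E, (E.box, true) ∈ X ∧ (p = (E.box, true) ∨ p = (E, true)) := by
  simp only [boxPart, Finset.mem_biUnion]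
  constructor
  · rintro ⟨⟨_ | _ | _ | _ | E, _ | _⟩, hq, hp⟩ <;> simp at hp
    exact ⟨E, hq, hp⟩
  · rintro ⟨E, hE, hp⟩
    exact ⟨_, hE, by simpa using hp⟩

lemma boxPart_subset {U X : Finset SForm} (hU : SubformulaClosed U) (hX : X ⊆ U) :
    boxPart X ⊆ U := by
  intro p hp
  obtain ⟨E, hE, rfl | rfl⟩ := mem_boxPart.1 hp
  · exact hX hE
  · exact hU.of_box (hX hE)

lemma boxPart_subset_boxPart {X Y : Finset SForm} (h : boxPart X ⊆ Y) :
    boxPart X ⊆ boxPart Y := by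
  intro p hp
  obtain ⟨E, hE, hp⟩ := mem_boxPart.1 hp
  exact mem_boxPart.2 ⟨E, h (mem_boxPart.2 ⟨E, hE, Or.inl rfl⟩), hp⟩

lemma derives_box_of_mem_premises_boxPart {Γ : Finset SForm} {Θ : Finset PFormula} {x : PFormula}
    (hx : x ∈ premises (boxPart Γ) Θ) : Derives (premises Γ Θ) x.box := by
  have four (E : PFormula) (h : E.box ∈ premises Γ Θ) : Derives (premises Γ Θ) E.box.box :=
    (Derives.of_theorem (GLLogic.box_four E)).mp (Derives.of_mem h)
  simp only [premises, Finset.mem_union, Finset.mem_image] at hx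
  obtain ⟨p, hp, rfl⟩ | ⟨D, hD, rfl⟩ := hx
  · obtain ⟨E, hE, rfl | rfl⟩ := mem_boxPart.1 hp
    · exact four E (toFormula_mem_premises hE)
    · exact Derives.of_mem (toFormula_mem_premises hE)
  · exact four D (box_mem_premises hD)

/-- `Θ` and `Λ` collect the formulas `D` whose box was assumed, on the left or on the right, when
realising a `¬□D`; they grow strictly along `World.R`, which makes it conversely well-founded. -/
structure World (P N : Set ℕ) (U V : Finset SForm) where
  Γ : Finset SForm
  Δ : Finset SForm
  Θ : Finset PFormula
  Λ : Finset PFormula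
  Γ_subset : Γ ⊆ U
  Δ_subset : Δ ⊆ V
  Θ_subset : Θ ⊆ U.image Prod.fst
  Λ_subset : Λ ⊆ V.image Prod.fst
  saturated_Γ : Saturated Γ
  saturated_Δ : Saturated Δ
  not_separable : ¬ Separable P N (premises Γ Θ) (premises Δ Λ)

namespace World

variable {P N : Set ℕ} {U V : Finset SForm}

def swap (w : World P N U V) : World N P V U :=
  ⟨w.Δ, w.Γ, w.Λ, w.Θ, w.Δ_subset, w.Γ_subset, w.Λ_subset, w.Θ_subset, w.saturated_Δ,
    w.saturated_Γ, fun h => w.not_separable h.symm⟩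

def R (w w' : World P N U V) : Prop :=
  boxPart w.Γ ⊆ w'.Γ ∧ boxPart w.Δ ⊆ w'.Δ ∧
    w.Θ.card + w.Λ.card < w'.Θ.card + w'.Λ.card

lemma R.swap {w w' : World P N U V} (h : w.R w') : w.swap.R w'.swap :=
  ⟨h.2.1, h.1, by simpa [World.swap, add_comm] using h.2.2⟩

instance : IsTrans (World P N U V) R where
  trans _ _ _ h h' :=
    ⟨(boxPart_subset_boxPart h.1).trans h'.1, (boxPart_subset_boxPart h.2.1).trans h'.2.1,
      h.2.2.trans h'.2.2⟩

lemma wellFounded_flip_R : WellFounded (flip (R : World P N U V → World P N U V → Prop)) := by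
  refine (InvImage.wf (fun w : World P N U V =>
      (U.image Prod.fst).card + (V.image Prod.fst).card - (w.Θ.card + w.Λ.card))
    wellFounded_lt).mono ?_
  intro w w' h
  have := Finset.card_le_card w.Θ_subset
  have := Finset.card_le_card w.Λ_subset
  have := h.2.2
  simp only [InvImage]
  omega

lemma exists_extending (hU : SubformulaClosed U) (hV : SubformulaClosed V)
    {Γ₀ Δ₀ : Finset SForm} {Θ Λ : Finset PFormula} (hΓ₀ : Γ₀ ⊆ U) (hΔ₀ : Δ₀ ⊆ V)
    (hΘ : Θ ⊆ U.image Prod.fst) (hΛ : Λ ⊆ V.image Prod.fst)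
    (h : ¬ Separable P N (premises Γ₀ Θ) (premises Δ₀ Λ)) :
    ∃ w : World P N U V, Γ₀ ⊆ w.Γ ∧ Δ₀ ⊆ w.Δ ∧ w.Θ = Θ ∧ w.Λ = Λ := by
  obtain ⟨Γ, hΓ₀Γ, hΓU, hΓ, hsep⟩ := exists_saturated hU hΓ₀ h
  obtain ⟨Δ, hΔ₀Δ, hΔV, hΔ, hsep'⟩ :=
    exists_saturated hV hΔ₀
      (fun h => hsep h.symm : ¬ Separable N P (premises Δ₀ Λ) (premises Γ Θ))
  exact ⟨⟨Γ, Δ, Θ, Λ, hΓU, hΔV, hΘ, hΛ, hΓ, hΔ, fun h => hsep' h.symm⟩,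
    hΓ₀Γ, hΔ₀Δ, rfl, rfl⟩

lemma exists_R_of_box_false_left (hU : SubformulaClosed U) (hV : SubformulaClosed V)
    (w : World P N U V) {D : PFormula} (hD : (D.box, false) ∈ w.Γ) :
    ∃ w', w.R w' ∧ (D, false) ∈ w'.Γ := by
  have hDΘ : D ∉ w.Θ := fun hDΘ => w.not_separable <| Separable.of_inconsistent_left <|
    Derives.of_entails (H := [D.box, D.box.neg])
      (by simpa using ⟨Derives.of_mem (box_mem_premises hDΘ),
        Derives.of_mem (toFormula_mem_premises hD)⟩)
      fun v => by simp
  have hsep : ¬ Separable P N (premises (insert (D, false) (boxPart w.Γ)) (insert D w.Θ))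
      (premises (boxPart w.Δ) w.Λ) := fun h =>
    w.not_separable <| Separable.of_diamond_left (toFormula_mem_premises hD)
      (fun _ => derives_box_of_mem_premises_boxPart) (fun _ => derives_box_of_mem_premises_boxPart)
      (by simpa [premises_insert_left, premises_insert_right] using h)
  obtain ⟨w', hΓ', hΔ', hΘ', hΛ'⟩ := exists_extending hU hV
    (Finset.insert_subset (hU.of_box (w.Γ_subset hD)) (boxPart_subset hU w.Γ_subset))
    (boxPart_subset hV w.Δ_subset)
    (Finset.insert_subset (Finset.mem_image_of_mem _ (hU.of_box (w.Γ_subset hD))) w.Θ_subset)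
    w.Λ_subset hsep
  refine ⟨w', ⟨(Finset.subset_insert _ _).trans hΓ', hΔ', ?_⟩,
    hΓ' (Finset.mem_insert_self _ _)⟩
  rw [hΘ', hΛ', Finset.card_insert_of_notMem hDΘ]
  omega

lemma exists_R_of_box_false_right (hU : SubformulaClosed U) (hV : SubformulaClosed V)
    (w : World P N U V) {D : PFormula} (hD : (D.box, false) ∈ w.Δ) :
    ∃ w', w.R w' ∧ (D, false) ∈ w'.Δ := by
  obtain ⟨w', hw, hD'⟩ := w.swap.exists_R_of_box_false_left hV hU hD
  exact ⟨w'.swap, hw.swap, hD'⟩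

lemma var_false_not_mem_of_mem_left
    (hP : ∀ n, (var n, true) ∈ U → (var n, false) ∈ V → n ∈ P) (w : World P N U V) {n : ℕ}
    (h : (var n, true) ∈ w.Γ) : (var n, false) ∉ w.Γ ∪ w.Δ := by
  intro hf
  rcases Finset.mem_union.1 hf with hf | hf
  · refine w.not_separable (Separable.of_inconsistent_left ?_)
    exact Derives.of_entails (H := [var n, (var n).neg]) (by
      simpa using ⟨Derives.of_mem (toFormula_mem_premises h),
        Derives.of_mem (toFormula_mem_premises hf)⟩)
      fun v => by simp
  · exact w.not_separable (Separable.of_var (toFormula_mem_premises h) (toFormula_mem_premises hf)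
      (hP n (w.Γ_subset h) (w.Δ_subset hf)))

theorem isHintikka (hU : SubformulaClosed U) (hV : SubformulaClosed V)
    (hP : ∀ n, (var n, true) ∈ U → (var n, false) ∈ V → n ∈ P)
    (hN : ∀ n, (var n, true) ∈ V → (var n, false) ∈ U → n ∈ N) :
    IsHintikka (R : World P N U V → World P N U V → Prop) fun w => w.Γ ∪ w.Δ where
  saturated w := w.saturated_Γ.union w.saturated_Δ
  var_consistent w n h := by
    rcases Finset.mem_union.1 h with h | h
    · exact w.var_false_not_mem_of_mem_left hP h
    · simpa [World.swap, Finset.union_comm] using w.swap.var_false_not_mem_of_mem_left hN h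
  falsum_not_mem w h := by
    rcases Finset.mem_union.1 h with h | h
    · exact w.not_separable (.of_inconsistent_left (Derives.of_mem (toFormula_mem_premises h)))
    · exact w.not_separable (.of_inconsistent_right (Derives.of_mem (toFormula_mem_premises h)))
  box_true w w' F hw h := by
    rcases Finset.mem_union.1 h with h | h
    · exact Finset.mem_union_left _ (hw.1 (mem_boxPart.2 ⟨F, h, Or.inr rfl⟩))
    · exact Finset.mem_union_right _ (hw.2.1 (mem_boxPart.2 ⟨F, h, Or.inr rfl⟩))
  box_false w F h := by
    rcases Finset.mem_union.1 h with h | h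
    · obtain ⟨w', hw, h'⟩ := w.exists_R_of_box_false_left hU hV h
      exact ⟨w', hw, Finset.mem_union_left _ h'⟩
    · obtain ⟨w', hw, h'⟩ := w.exists_R_of_box_false_right hU hV h
      exact ⟨w', hw, Finset.mem_union_right _ h'⟩

end World

/-- `GL` enjoys the Lyndon interpolation property. -/
theorem GL_LIP (A B : PFormula) (h : GLLogic (A.imp B)) :
    ∃ C : PFormula,
      pvpos C ⊆ pvpos A ∩ pvpos B ∧
      pvneg C ⊆ pvneg A ∩ pvneg B ∧
      GLLogic (A.imp C) ∧ GLLogic (C.imp B) := by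
  by_contra hC
  have hsep : ¬ Separable (pvpos A ∩ pvpos B) (pvneg A ∩ pvneg B)
      (premises {(A, true)} ∅) (premises {(B, false)} ∅) :=
    fun h => hC (Separable.exists_interpolant (by simpa [premises] using h))
  have hU := subformulaClosed_signedSubformulas A true
  have hV := subformulaClosed_signedSubformulas B false
  obtain ⟨w, hA, hB, -, -⟩ := World.exists_extending hU hV
    (by simp [mem_signedSubformulas_self]) (by simp [mem_signedSubformulas_self]) (by simp)
    (by simp) hsep
  have hL := World.isHintikka (P := pvpos A ∩ pvpos B) (N := pvneg A ∩ pvneg B) hU hV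
    (fun _ hA hB => ⟨mem_PS_of_mem_signedSubformulas hA, mem_PS_of_mem_signedSubformulas hB⟩)
    (fun _ hB hA => ⟨mem_PS_of_mem_signedSubformulas hA, mem_PS_of_mem_signedSubformulas hB⟩)
  exact hL.not_GLLogic_imp World.wellFounded_flip_R
    (Finset.mem_union_left _ (hA (Finset.mem_singleton_self _)))
    (Finset.mem_union_right _ (hB (Finset.mem_singleton_self _))) h
end

section
/- For any formula A of the bimodal language L₂, if GR• ⊢ A, then A is valid on all ■-serial GR°-frames. -/
/-- The logic GRbullet. -/
inductive GRbullet : Formula → Prop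
  | taut {A : Formula} : Taut A → GRbullet A
  | k {A B : Formula} : GRbullet (((A.imp B).box).imp ((A.box).imp (B.box)))
  | loeb {A : Formula} : GRbullet ((((A.box).imp A).box).imp (A.box))
  | bbBox {A : Formula} : GRbullet ((A.bb).imp (A.box))
  | boxBb {A : Formula} : GRbullet ((A.box).imp ((A.bb).box))
  | ros {A : Formula} : GRbullet ((A.box).imp ((Formula.falsum.box).or (A.bb)))
  | diaBb {A : Formula} : GRbullet (((A.bb).dia).imp (A.dia))
  | mp {A B : Formula} : GRbullet (A.imp B) → GRbullet A → GRbullet B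
  | nec {A : Formula} : GRbullet A → GRbullet (A.box)
  | bbnec {A : Formula} : GRbullet A → GRbullet (A.bb)
  | rosser {A : Formula} : GRbullet (A.neg) → GRbullet ((A.bb).neg)

/-!
Soundness is checked rule by rule. Each axiom of `GR⁻` corresponds to one frame condition:
Löb's axiom to the converse well-foundedness of `⊏`, `■A → □A` to (i), `□A → □■A` to (ii),
`□A → □⊥ ∨ ■A` to (iii) and `◇■A → ◇A` to (iv). The rules preserve validity on every frame,
except the Rosser rule, which needs `■`-seriality: a world refuting `¬■A` has a `≺_A`-successor,
and that successor would force `A`.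
-/

namespace GRSat

variable {F : GRFrame} (S : GRSat F)

open Classical in
theorem evalProp_frc_iff (w : F.W) (A : Formula) :
    evalProp (fun C => decide (S.frc w C)) A = true ↔ S.frc w A := by
  induction A with
  | var n => simp [evalProp]
  | falsum => simpa [evalProp] using S.frc_falsum w
  | neg A ih => simp [evalProp, S.frc_neg, ← ih]
  | or A B ihA ihB => simp [evalProp, S.frc_or, ihA, ihB]
  | box A => simp [evalProp]
  | bb A => simp [evalProp]

end GRSat

section Axioms

variable (F : GRFrame) (A B : Formula)

theorem validOn_of_taut (hA : Taut A) : ValidOn F A := fun S w =>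
  (S.evalProp_frc_iff w A).mp (hA _)

theorem validOn_k : ValidOn F (((A.imp B).box).imp ((A.box).imp (B.box))) := by
  intro S w
  simp only [S.frc_imp, S.frc_box]
  exact fun hAB hA x hx => hAB x hx (hA x hx)

theorem validOn_loeb : ValidOn F ((((A.box).imp A).box).imp (A.box)) := by
  intro S w
  simp only [S.frc_imp, S.frc_box]
  intro hLoeb x hwx
  induction x using F.cwf.induction with
  | _ x ih => exact hLoeb x hwx fun y hxy => ih y hxy (F.lt_trans hwx hxy)

theorem validOn_bb_imp_box : ValidOn F ((A.bb).imp (A.box)) := by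
  intro S w
  simp only [S.frc_imp, S.frc_bb, S.frc_box]
  exact fun h x hx => h x (F.lt_to_prec hx)

theorem validOn_box_imp_box_bb : ValidOn F ((A.box).imp ((A.bb).box)) := by
  intro S w
  simp only [S.frc_imp, S.frc_bb, S.frc_box]
  exact fun h x hwx y hxy => h y (F.lt_prec_lt hwx hxy)

theorem validOn_box_imp_box_falsum_or_bb :
    ValidOn F ((A.box).imp ((Formula.falsum.box).or (A.bb))) := by
  intro S w
  rw [S.frc_imp, S.frc_or, or_iff_not_imp_left, S.frc_box, S.frc_box, S.frc_bb]
  intro hA hNotFalsum y hwy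
  obtain ⟨x, hwx, -⟩ := not_forall₂.mp hNotFalsum
  exact hA y (F.prec_lt_lt hwy hwx)

theorem validOn_dia_bb_imp_dia : ValidOn F (((A.bb).dia).imp (A.dia)) := by
  intro S w
  rw [S.frc_imp, S.frc_dia, S.frc_dia]
  rintro ⟨x, hwx, hx⟩
  obtain ⟨z, hxz, hwz⟩ := F.lt_succ (B := A) hwx
  exact ⟨z, hwz, (S.frc_bb x A).mp hx z hxz⟩

end Axioms

namespace ValidOn

variable {F : GRFrame} {A B : Formula}

theorem neg_bb (hF : F.Serial) (hA : ValidOn F A.neg) : ValidOn F A.bb.neg := by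
  intro S w
  rw [S.frc_neg, S.frc_bb]
  intro hbb
  obtain ⟨y, hwy⟩ := hF A w
  exact (S.frc_neg y A).mp (hA S y) (hbb y hwy)

end ValidOn

/-- Every theorem of `GR•` is valid on all `■`-serial `GR°`-frames. -/
theorem GRbullet_sound_serial (A : Formula) (h : GRbullet A) :
    ∀ F : GRFrame, F.Serial → ValidOn F A := by
  induction h with
  | taut hA => exact fun F _ => validOn_of_taut F _ hA
  | k => exact fun F _ => validOn_k F _ _
  | loeb => exact fun F _ => validOn_loeb F _
  | bbBox => exact fun F _ => validOn_bb_imp_box F _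
  | boxBb => exact fun F _ => validOn_box_imp_box_bb F _
  | ros => exact fun F _ => validOn_box_imp_box_falsum_or_bb F _
  | diaBb => exact fun F _ => validOn_dia_bb_imp_dia F _
  | mp _ _ ihAB ihA => exact fun F hF => (ihAB F hF).mp (ihA F hF)
  | nec _ ih => exact fun F hF => (ih F hF).box
  | bbnec _ ih => exact fun F hF => (ih F hF).bb
  | rosser _ ih => exact fun F hF => (ih F hF).neg_bb hF
end
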